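/- arXiv:1208.0492 — 8 statements merged into one kernel-verified Lean document; each statement's English description precedes it below -/
import Mathlib

section
/- Let l ≥ 2 be an integer and let λ be a real number with 0 < λ < 1. Then the period Ω(C_{l,λ}) = 2^{2−l} ∫_0^λ (u(λ−u)(1−u))^{−(l−1)/l} du satisfies Ω(C_{l,λ}) = (Γ(1/l))² / (2^{l−2} · λ^{(l−2)/l} · Γ(2/l)) · ∑_{n=0}^∞ [ ((l−1)/l)_n · (1/l)_n / ( (2/l)_n · n! ) ] · λ^n, where (x)_n = ∏_{k=0}^{n−1} (x+k) is the rising factorial and Γ is the real Gamma function. -/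
open Finset intervalIntegral

lemma hasDerivAt_one_sub_rpow (σ : ℝ) {t : ℝ} (ht : t < 1) :
    HasDerivAt (fun x : ℝ => (1 - x) ^ (-σ)) (σ * (1 - t) ^ (-σ - 1)) t := by
  have h1 : HasDerivAt (fun x : ℝ => 1 - x) (-1) t := by
    simpa using (hasDerivAt_id t).const_sub 1
  have h2 : HasDerivAt (fun x : ℝ => x ^ (-σ)) (-σ * (1 - t) ^ (-σ - 1)) (1 - t) :=
    Real.hasDerivAt_rpow_const (Or.inl (by linarith))
  have := h2.comp t h1
  exact this.congr_deriv (by ring)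

lemma contOn_one_sub_rpow (e : ℝ) {y : ℝ} (hy : y < 1) :
    ContinuousOn (fun x : ℝ => (1 - x) ^ e) (Set.Icc 0 y) := by
  apply ContinuousOn.rpow_const (by fun_prop)
  intro x hx
  exact Or.inl (by simp only [Set.mem_Icc] at hx; intro h; nlinarith [hx.2])

lemma prod_one_add_eq_factorial (M : ℕ) :
    ∏ k ∈ Finset.range M, (1 + (k:ℝ)) = (M.factorial : ℝ) := by
  induction M with
  | zero => simp
  | succ m ih => rw [Finset.prod_range_succ, ih, Nat.factorial_succ]; push_cast; ring

theorem binomial_hasSum {s y : ℝ} (hs0 : 0 < s) (hs1 : s ≤ 1) (hy0 : 0 ≤ y) (hy1 : y < 1) :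
    HasSum (fun n : ℕ => (∏ k ∈ Finset.range n, (s + k)) / (n.factorial : ℝ) * y ^ n)
      ((1 - y) ^ (-s)) := by
  set A : ℝ := (1 - y) ^ (-s) with hA
  set f : ℕ → ℝ := fun n => (∏ k ∈ Finset.range n, (s + k)) / (n.factorial : ℝ) * y ^ n with hf
  set R : ℕ → ℝ := fun N => (∏ k ∈ Finset.range (N + 1), (s + k)) / (N.factorial : ℝ) *
      ∫ t in (0:ℝ)..y, (y - t) ^ N * (1 - t) ^ (-s - (N + 1)) with hR
  have hyI : ∀ t ∈ Set.Icc (0:ℝ) y, t < 1 := fun t ht => lt_of_le_of_lt ht.2 hy1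
  have huI : Set.uIcc (0:ℝ) y = Set.Icc 0 y := Set.uIcc_of_le hy0
  have hcont : ∀ (N : ℕ) (e : ℝ), ContinuousOn
      (fun t : ℝ => (y - t) ^ N * (1 - t) ^ e) (Set.Icc 0 y) := by
    intro N e
    exact (ContinuousOn.pow (by fun_prop) N).mul (contOn_one_sub_rpow e hy1)
  have hint : ∀ (N : ℕ) (e : ℝ), IntervalIntegrable
      (fun t : ℝ => (y - t) ^ N * (1 - t) ^ e) MeasureTheory.volume 0 y := by
    intro N e
    apply ContinuousOn.intervalIntegrable
    rw [huI]; exact hcont N e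
  have hint1 : ∀ (e : ℝ), IntervalIntegrable
      (fun t : ℝ => (1 - t) ^ e) MeasureTheory.volume 0 y := by
    intro e
    apply ContinuousOn.intervalIntegrable
    rw [huI]; exact contOn_one_sub_rpow e hy1
  -- base case : R 0 = A - 1
  have baseR : R 0 = A - 1 := by
    have key : (∫ t in (0:ℝ)..y, s * (1 - t) ^ (-s - 1)) = A - 1 := by
      rw [integral_eq_sub_of_hasDerivAt (f := fun x : ℝ => (1 - x) ^ (-s))
        (f' := fun t : ℝ => s * (1 - t) ^ (-s - 1))
        (fun t ht => hasDerivAt_one_sub_rpow s (hyI t (huI ▸ ht)))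
        ((hint1 (-s - 1)).const_mul s)]
      simp [hA, Real.one_rpow]
    have e2 : (∫ t in (0:ℝ)..y, (y - t) ^ 0 * (1 - t) ^ (-s - ((0:ℕ) + 1)))
        = ∫ t in (0:ℝ)..y, (1 - t) ^ (-s - 1) := by
      apply integral_congr
      intro t _
      norm_num
    have : R 0 = s * ∫ t in (0:ℝ)..y, (1 - t) ^ (-s - 1) := by
      rw [hR]
      simp only [e2]
      norm_num
    rw [this, ← intervalIntegral.integral_const_mul, key]
  -- inductive step : R N = f (N+1) + R (N+1)
  have step : ∀ N : ℕ, R N = f (N + 1) + R (N + 1) := by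
    intro N
    set σ : ℝ := s + N + 1 with hσ
    -- FTC/integration by parts
    have ibp : (∫ t in (0:ℝ)..y, (y - t) ^ N * (1 - t) ^ (-σ))
        = y ^ (N+1) / (N+1) + (σ / (N+1)) * ∫ t in (0:ℝ)..y, (y - t) ^ (N+1) * (1 - t) ^ (-σ - 1) := by
      have hderiv : ∀ t ∈ Set.uIcc (0:ℝ) y,
          HasDerivAt (fun x : ℝ => -((y - x) ^ (N+1) * (1 - x) ^ (-σ)) / (N+1))
            ((y - t) ^ N * (1 - t) ^ (-σ) - (σ / (N+1)) * ((y - t) ^ (N+1) * (1 - t) ^ (-σ - 1))) t := by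
        intro t ht
        have ht1 : t < 1 := hyI t (huI ▸ ht)
        have hu : HasDerivAt (fun x : ℝ => (y - x) ^ (N+1)) (((N:ℝ)+1) * (y - t) ^ N * (-1)) t := by
          have h0 : HasDerivAt (fun x : ℝ => y - x) (-1) t := by
            simpa using (hasDerivAt_id t).const_sub y
          have := h0.fun_pow (N+1)
          simpa using this
        have hv := hasDerivAt_one_sub_rpow σ ht1
        have := ((hu.mul hv).neg).div_const ((N:ℝ)+1)
        refine this.congr_deriv ?_
        have hN : ((N:ℝ)+1) ≠ 0 := by positivity
        field_simp
        ring
      have hFTC := integral_eq_sub_of_hasDerivAt hderiv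
        (((hint N (-σ)).sub (((hint (N+1) (-σ - 1))).const_mul (σ / (N+1)))))
      rw [intervalIntegral.integral_sub (hint N (-σ))
        ((hint (N+1) (-σ - 1)).const_mul (σ / (N+1))),
        intervalIntegral.integral_const_mul] at hFTC
      have hend : -((y - y) ^ (N+1) * (1 - y) ^ (-σ)) / (N+1)
          - -((y - 0) ^ (N+1) * (1 - 0) ^ (-σ)) / (N+1) = y ^ (N+1) / (N+1) := by
        simp [Real.one_rpow]
        ring
      rw [hend] at hFTC
      linarith [hFTC]
    -- rewrite exponents to the `R` form
    have eN : (∫ t in (0:ℝ)..y, (y - t) ^ N * (1 - t) ^ (-s - ((N:ℝ) + 1)))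
        = ∫ t in (0:ℝ)..y, (y - t) ^ N * (1 - t) ^ (-σ) := by
      apply integral_congr; intro t _; congr 1; rw [hσ]; ring
    have eN1 : (∫ t in (0:ℝ)..y, (y - t) ^ (N+1) * (1 - t) ^ (-s - ((N:ℝ) + 1 + 1)))
        = ∫ t in (0:ℝ)..y, (y - t) ^ (N+1) * (1 - t) ^ (-σ - 1) := by
      apply integral_congr; intro t _; congr 1; rw [hσ]; ring
    have hfacN : ((N.factorial : ℝ)) ≠ 0 := by positivity
    have hN1 : ((N:ℝ)+1) ≠ 0 := by positivity
    rw [hR]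
    simp only
    push_cast
    rw [eN, eN1]
    set I := ∫ t in (0:ℝ)..y, (y - t) ^ (N+1) * (1 - t) ^ (-σ - 1) with hI
    rw [ibp, hf]
    simp only
    rw [prod_range_succ (f := fun k : ℕ => (s + (k:ℝ))) (n := N+1), Nat.factorial_succ, hσ]
    push_cast
    field_simp
    ring
  -- partial sums
  have hpartial : ∀ N : ℕ, ∑ n ∈ range (N + 1), f n = A - R N := by
    intro N
    induction N with
    | zero =>
      have f0 : f 0 = 1 := by simp [hf]
      rw [Finset.sum_range_one, f0, baseR]; ring
    | succ m ih =>
      rw [Finset.sum_range_succ, ih, step m]; ring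
  have hInn : ∀ N : ℕ, 0 ≤ ∫ t in (0:ℝ)..y, (y - t) ^ N * (1 - t) ^ (-s - ((N:ℝ) + 1)) := by
    intro N
    apply intervalIntegral.integral_nonneg hy0
    intro t ht
    have h0 : 0 ≤ y - t := by linarith [ht.2]
    have h1 : (0:ℝ) ≤ 1 - t := by linarith [hyI t ht]
    positivity
  have hcoefnn : ∀ N : ℕ, 0 ≤ (∏ k ∈ Finset.range (N+1), (s + (k:ℝ))) / (N.factorial : ℝ) := by
    intro N
    exact div_nonneg (Finset.prod_nonneg fun k _ => by positivity) (by positivity)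
  have Rnn : ∀ N, 0 ≤ R N := fun N => mul_nonneg (hcoefnn N) (hInn N)
  -- bound on R
  set Cv : ℝ := ∫ t in (0:ℝ)..y, (1 - t) ^ (-s - 1) with hCv
  have hCnn : 0 ≤ Cv := by
    apply intervalIntegral.integral_nonneg hy0
    intro t ht
    have h1 : (0:ℝ) ≤ 1 - t := by linarith [hyI t ht]
    positivity
  have Rle : ∀ N : ℕ, R N ≤ ((N:ℝ) + 1) * (y ^ N * Cv) := by
    intro N
    have hcoef : (∏ k ∈ Finset.range (N+1), (s + (k:ℝ))) / (N.factorial : ℝ) ≤ (N:ℝ) + 1 := by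
      have hp : ∏ k ∈ Finset.range (N+1), (s + (k:ℝ)) ≤ ∏ k ∈ Finset.range (N+1), (1 + (k:ℝ)) :=
        Finset.prod_le_prod (fun k _ => by positivity) (fun k _ => by linarith)
      rw [prod_one_add_eq_factorial (N+1), Nat.factorial_succ] at hp
      rw [div_le_iff₀ (by positivity : (0:ℝ) < (N.factorial : ℝ))]
      push_cast at hp ⊢
      linarith
    have hIle : (∫ t in (0:ℝ)..y, (y - t) ^ N * (1 - t) ^ (-s - ((N:ℝ) + 1))) ≤ y ^ N * Cv := by
      rw [hCv, ← intervalIntegral.integral_const_mul]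
      apply intervalIntegral.integral_mono_on hy0 (hint N _) ((hint1 (-s-1)).const_mul (y^N))
      intro t ht
      have h1t : (0:ℝ) < 1 - t := by linarith [hyI t ht]
      have hyt : 0 ≤ y - t := by linarith [ht.2]
      have key : (1-t) ^ (-s - ((N:ℝ)+1)) = (1-t)^(-s-1) * ((1-t)^N)⁻¹ := by
        rw [show -s - ((N:ℝ)+1) = (-s-1) + (-(N:ℝ)) by ring, Real.rpow_add h1t]
        congr 1
        rw [Real.rpow_neg h1t.le, Real.rpow_natCast]
      rw [key]
      have hdiv : (y - t) / (1 - t) ≤ y := by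
        rw [div_le_iff₀ h1t]
        nlinarith [mul_nonneg ht.1 (sub_nonneg.mpr hy1.le)]
      calc (y-t)^N * ((1-t)^(-s-1) * ((1-t)^N)⁻¹)
          = ((y-t)/(1-t))^N * (1-t)^(-s-1) := by rw [div_pow]; ring
        _ ≤ y^N * (1-t)^(-s-1) := by
            apply mul_le_mul_of_nonneg_right _ (Real.rpow_nonneg h1t.le _)
            exact pow_le_pow_left₀ (by positivity) hdiv N
    calc R N ≤ ((N:ℝ) + 1) * ∫ t in (0:ℝ)..y, (y - t) ^ N * (1 - t) ^ (-s - ((N:ℝ) + 1)) :=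
          mul_le_mul_of_nonneg_right hcoef (hInn N)
      _ ≤ ((N:ℝ) + 1) * (y ^ N * Cv) := mul_le_mul_of_nonneg_left hIle (by positivity)
  -- limit of the bound
  have t1 : Filter.Tendsto (fun n : ℕ => (n:ℝ) * y ^ n) Filter.atTop (nhds 0) := by
    have := (summable_pow_mul_geometric_of_norm_lt_one 1
      (r := y) (by rwa [Real.norm_eq_abs, abs_of_nonneg hy0])).tendsto_atTop_zero
    simpa using this
  have t2 : Filter.Tendsto (fun n : ℕ => y ^ n) Filter.atTop (nhds 0) :=
    tendsto_pow_atTop_nhds_zero_of_lt_one hy0 hy1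
  have t3 : Filter.Tendsto (fun n : ℕ => ((n:ℝ) + 1) * (y ^ n * Cv)) Filter.atTop (nhds 0) := by
    have h := (t1.add t2).mul_const Cv
    simp only [add_zero, zero_add, zero_mul] at h
    exact h.congr (fun n => by ring)
  have hRlim : Filter.Tendsto R Filter.atTop (nhds 0) := squeeze_zero Rnn Rle t3
  have hTend : Filter.Tendsto (fun N => ∑ n ∈ range N, f n) Filter.atTop (nhds A) := by
    rw [← Filter.tendsto_add_atTop_iff_nat 1]
    have h : Filter.Tendsto (fun N => A - R N) Filter.atTop (nhds (A - 0)) :=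
      tendsto_const_nhds.sub hRlim
    simp only [sub_zero] at h
    exact h.congr (fun N => (hpartial N).symm)
  have fnn : ∀ n, 0 ≤ f n := by
    intro n
    simp only [hf]
    exact mul_nonneg (div_nonneg (Finset.prod_nonneg fun k _ => by positivity)
      (by positivity)) (by positivity)
  have hAnn : 0 ≤ A := Real.rpow_nonneg (by linarith) _
  have hble : ∀ n, ∑ i ∈ range n, f i ≤ A := by
    intro n
    cases n with
    | zero => simpa using hAnn
    | succ m => rw [hpartial m]; linarith [Rnn m]
  have hsummable : Summable f := summable_of_sum_range_le fnn hble
  exact (Summable.hasSum_iff_tendsto_nat hsummable).mpr hTend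


lemma integral_rpow_beta {a b : ℝ} (ha : 0 < a) (hb : 0 < b) :
    ∫ t in (0:ℝ)..1, t ^ (a - 1) * (1 - t) ^ (b - 1) =
      Real.Gamma a * Real.Gamma b / Real.Gamma (a + b) := by
  have h := Complex.Gamma_mul_Gamma_eq_betaIntegral (s := (a:ℂ)) (t := (b:ℂ))
    (by simpa using ha) (by simpa using hb)
  have hbeta : Complex.betaIntegral a b =
      ((∫ t in (0:ℝ)..1, t ^ (a-1) * (1-t) ^ (b-1) : ℝ) : ℂ) := by
    rw [Complex.betaIntegral, ← intervalIntegral.integral_ofReal]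
    apply intervalIntegral.integral_congr
    intro x hx
    rw [Set.uIcc_of_le (by norm_num : (0:ℝ) ≤ 1)] at hx
    dsimp only
    rw [show ((a:ℂ) - 1) = ((a - 1 : ℝ) : ℂ) by push_cast; ring,
      show ((b:ℂ) - 1) = ((b - 1 : ℝ) : ℂ) by push_cast; ring,
      show (1 - (x:ℂ)) = ((1 - x : ℝ) : ℂ) by push_cast; ring,
      ← Complex.ofReal_cpow hx.1, ← Complex.ofReal_cpow (by linarith [hx.2] : (0:ℝ) ≤ 1 - x)]
    push_cast
    ring
  rw [hbeta, show ((a:ℂ) + (b:ℂ)) = ((a + b : ℝ) : ℂ) by push_cast; ring,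
    Complex.Gamma_ofReal, Complex.Gamma_ofReal, Complex.Gamma_ofReal,
    ← Complex.ofReal_mul, ← Complex.ofReal_mul] at h
  have h2 := Complex.ofReal_inj.mp h
  have hg : Real.Gamma (a + b) ≠ 0 := (Real.Gamma_pos_of_pos (by positivity)).ne'
  field_simp
  linarith [h2]

lemma Gamma_add_nat' {x : ℝ} (hx : 0 < x) (n : ℕ) :
    Real.Gamma (x + n) = Real.Gamma x * ∏ k ∈ Finset.range n, (x + k) := by
  induction n with
  | zero => simp
  | succ m ih =>
    have hne : x + (m:ℝ) ≠ 0 := by positivity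
    rw [show (x + ((m+1 : ℕ) : ℝ)) = (x + m) + 1 by push_cast; ring,
      Real.Gamma_add_one hne, ih, Finset.prod_range_succ]
    ring

lemma J_eval {s : ℝ} (hs0 : 0 < s) (hs1 : s < 1) (n : ℕ) :
    ∫ t in (0:ℝ)..1, t ^ ((n:ℝ) - s) * (1 - t) ^ (-s) =
      Real.Gamma (1-s)^2 / Real.Gamma (2-2*s) *
        ((∏ k ∈ Finset.range n, ((1-s) + k)) / (∏ k ∈ Finset.range n, ((2-2*s) + k))) := by
  have hb : 0 < 1 - s := by linarith
  have ha : 0 < (n:ℝ) + 1 - s := by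
    have : (0:ℝ) ≤ n := Nat.cast_nonneg n
    linarith
  have h := integral_rpow_beta (a := (n:ℝ)+1-s) (b := 1-s) ha hb
  rw [show (n:ℝ)+1-s-1 = (n:ℝ)-s by ring, show (1-s)-1 = -s by ring] at h
  rw [h, show (n:ℝ)+1-s = (1-s) + n by ring, Gamma_add_nat' hb,
    show (1-s) + (n:ℝ) + (1-s) = (2-2*s) + n by ring, Gamma_add_nat' (by linarith : (0:ℝ) < 2-2*s)]
  have hQ : (0:ℝ) < ∏ k ∈ Finset.range n, ((2-2*s) + (k:ℝ)) :=
    Finset.prod_pos fun k _ => by have : (0:ℝ) ≤ k := Nat.cast_nonneg k; linarith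
  have hg : Real.Gamma (2-2*s) ≠ 0 := (Real.Gamma_pos_of_pos (by linarith)).ne'
  field_simp


open MeasureTheory in
lemma key_integral {s lam : ℝ} (hs0 : 0 < s) (hs1 : s < 1) (h0 : 0 < lam) (h1 : lam < 1) :
    ∫ t in (0:ℝ)..1, (t * (1 - t) * (1 - lam * t)) ^ (-s) =
      Real.Gamma (1-s)^2 / Real.Gamma (2-2*s) *
        ∑' n : ℕ, (∏ k ∈ Finset.range n, (s + k)) * (∏ k ∈ Finset.range n, ((1-s) + k)) /
          ((∏ k ∈ Finset.range n, ((2-2*s) + k)) * (n.factorial : ℝ)) * lam ^ n := by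
  set g : ℝ → ℝ := fun t => (t * (1 - t) * (1 - lam * t)) ^ (-s) with hg
  set F : ℕ → ℝ → ℝ := fun n t => (∏ k ∈ Finset.range n, (s + (k:ℝ))) / (n.factorial : ℝ) *
      lam ^ n * (t ^ ((n:ℝ) - s) * (1 - t) ^ (-s)) with hF
  set tn : ℕ → ℝ := fun n => (∏ k ∈ Finset.range n, (s + (k:ℝ))) *
      (∏ k ∈ Finset.range n, ((1-s) + (k:ℝ))) /
      ((∏ k ∈ Finset.range n, ((2-2*s) + (k:ℝ))) * (n.factorial : ℝ)) * lam ^ n with htn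
  set D : ℝ := Real.Gamma (1-s)^2 / Real.Gamma (2-2*s) with hD
  have hDpos : 0 < D := by
    rw [hD]
    have h1' := Real.Gamma_pos_of_pos (show (0:ℝ) < 1 - s by linarith)
    have h2' := Real.Gamma_pos_of_pos (show (0:ℝ) < 2 - 2*s by linarith)
    positivity
  -- pointwise HasSum on Ioc 0 1
  have hpt : ∀ t ∈ Set.Ioc (0:ℝ) 1, HasSum (fun n => F n t) (g t) := by
    intro t ht
    have ht0 : 0 < t := ht.1
    have ht1 : t ≤ 1 := ht.2
    have hyy : lam * t < 1 := lt_of_le_of_lt (by nlinarith) h1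
    have hbin := binomial_hasSum hs0 hs1.le (mul_nonneg h0.le ht0.le) hyy
    have h2 := hbin.mul_right (t ^ (-s) * (1 - t) ^ (-s))
    have hgt : g t = (1 - lam*t) ^ (-s) * (t ^ (-s) * (1 - t) ^ (-s)) := by
      rw [hg]
      simp only
      rw [Real.mul_rpow (by nlinarith : (0:ℝ) ≤ t * (1-t)) (by nlinarith : (0:ℝ) ≤ 1 - lam*t),
        Real.mul_rpow ht0.le (by linarith : (0:ℝ) ≤ 1 - t)]
      ring
    rw [hgt]
    convert h2 using 2 with n
    · rfl
    rw [hF]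
    simp only
    rw [mul_pow, show ((n:ℝ) - s) = (n:ℝ) + (-s) by ring, Real.rpow_add ht0,
      Real.rpow_natCast]
    ring
  -- the integrals of the terms
  have hbetaInt : ∀ n : ℕ, IntervalIntegrable
      (fun t : ℝ => t ^ ((n:ℝ) - s) * (1 - t) ^ (-s)) volume 0 1 := by
    intro n
    have hc := Complex.betaIntegral_convergent (u := (((n:ℝ)+1-s : ℝ) : ℂ))
      (v := ((1 - s : ℝ) : ℂ)) (by simp; linarith [Nat.cast_nonneg (α := ℝ) n])
      (by simp; linarith)
    have hc2 : IntervalIntegrable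
        (fun x : ℝ => ((x ^ ((n:ℝ) - s) * (1-x) ^ (-s) : ℝ) : ℂ)) volume 0 1 := by
      refine ⟨(hc.1.congr ?_), (hc.2.congr ?_)⟩
      · filter_upwards [ae_restrict_mem measurableSet_Ioc] with x hx
        have hx0 : (0:ℝ) ≤ x := le_of_lt hx.1
        have hx1 : (0:ℝ) ≤ 1 - x := by linarith [hx.2]
        rw [show ((((n:ℝ)+1-s : ℝ)) : ℂ) - 1 = (((n:ℝ) - s : ℝ) : ℂ) by push_cast; ring,
          show ((1 - s : ℝ) : ℂ) - 1 = ((-s : ℝ) : ℂ) by push_cast; ring,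
          show (1 - (x:ℂ)) = ((1 - x : ℝ) : ℂ) by push_cast; ring,
          ← Complex.ofReal_cpow hx0, ← Complex.ofReal_cpow hx1]
        push_cast
        ring
      · have : Set.Ioc (1:ℝ) 0 = ∅ := Set.Ioc_eq_empty (by norm_num)
        rw [Filter.EventuallyEq, ae_restrict_iff' measurableSet_Ioc]
        filter_upwards with x hx
        rw [this] at hx
        exact absurd hx (Set.notMem_empty x)
    have hre := hc2.1.re
    have him : IntervalIntegrable (fun t : ℝ => t ^ ((n:ℝ) - s) * (1 - t) ^ (-s)) volume 0 1 := by
      constructor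
      · exact hre.congr (by filter_upwards with x; simp)
      · exact hc2.2.re.congr (by filter_upwards with x; simp)
    exact him
  have hFion : ∀ n : ℕ, IntegrableOn (F n) (Set.Ioc (0:ℝ) 1) volume := by
    intro n
    have := ((hbetaInt n).1.const_mul
      ((∏ k ∈ Finset.range n, (s + (k:ℝ))) / (n.factorial : ℝ) * lam ^ n))
    exact this
  have hJ : ∀ n : ℕ, ∫ t in Set.Ioc (0:ℝ) 1, (t ^ ((n:ℝ) - s) * (1 - t) ^ (-s)) =
      D * ((∏ k ∈ Finset.range n, ((1-s) + (k:ℝ))) / (∏ k ∈ Finset.range n, ((2-2*s) + (k:ℝ)))) := by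
    intro n
    rw [← intervalIntegral.integral_of_le (by norm_num : (0:ℝ) ≤ 1), J_eval hs0 hs1 n, hD]
  have hV : ∀ n : ℕ, ∫ t in Set.Ioc (0:ℝ) 1, F n t = D * tn n := by
    intro n
    rw [hF]
    simp only
    rw [MeasureTheory.integral_const_mul, hJ n, htn]
    have hR : (0:ℝ) < ∏ k ∈ Finset.range n, ((2-2*s) + (k:ℝ)) :=
      Finset.prod_pos fun k _ => by have : (0:ℝ) ≤ k := Nat.cast_nonneg k; linarith
    have hfac : (0:ℝ) < (n.factorial : ℝ) := by positivity
    field_simp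
  -- summability of tn
  have htn_nonneg : ∀ n, 0 ≤ tn n := by
    intro n
    rw [htn]
    have hP : (0:ℝ) ≤ ∏ k ∈ Finset.range n, (s + (k:ℝ)) :=
      Finset.prod_nonneg fun k _ => by positivity
    have hQ : (0:ℝ) ≤ ∏ k ∈ Finset.range n, ((1-s) + (k:ℝ)) :=
      Finset.prod_nonneg fun k _ => by have : (0:ℝ) ≤ k := Nat.cast_nonneg k; linarith
    have hR : (0:ℝ) ≤ ∏ k ∈ Finset.range n, ((2-2*s) + (k:ℝ)) :=
      Finset.prod_nonneg fun k _ => by have : (0:ℝ) ≤ k := Nat.cast_nonneg k; linarith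
    positivity
  have htn_le : ∀ n, tn n ≤ lam ^ n := by
    have hPQ : ∀ n : ℕ, (∏ k ∈ Finset.range n, (s + (k:ℝ))) *
        (∏ k ∈ Finset.range n, ((1-s) + (k:ℝ))) ≤
        (∏ k ∈ Finset.range n, ((2-2*s) + (k:ℝ))) * (n.factorial : ℝ) := by
      intro n
      induction n with
      | zero => simp
      | succ m ih =>
        rw [Finset.prod_range_succ, Finset.prod_range_succ, Finset.prod_range_succ,
          Nat.factorial_succ]
        push_cast
        have hP : (0:ℝ) ≤ ∏ k ∈ Finset.range m, (s + (k:ℝ)) :=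
          Finset.prod_nonneg fun k _ => by positivity
        have hQ : (0:ℝ) ≤ ∏ k ∈ Finset.range m, ((1-s) + (k:ℝ)) :=
          Finset.prod_nonneg fun k _ => by have : (0:ℝ) ≤ k := Nat.cast_nonneg k; linarith
        have hfac : (0:ℝ) ≤ (m.factorial : ℝ) := by positivity
        have hm0 : (0:ℝ) ≤ m := Nat.cast_nonneg m
        have hstep : (s + (m:ℝ)) * ((1-s) + (m:ℝ)) ≤ ((2-2*s) + (m:ℝ)) * ((m:ℝ) + 1) := by
          nlinarith [mul_nonneg (show (0:ℝ) ≤ 1 - s by linarith) hm0]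
        calc (∏ k ∈ Finset.range m, (s + (k:ℝ))) * (s + (m:ℝ)) *
              ((∏ k ∈ Finset.range m, ((1-s) + (k:ℝ))) * ((1-s) + (m:ℝ)))
            = ((∏ k ∈ Finset.range m, (s + (k:ℝ))) * (∏ k ∈ Finset.range m, ((1-s) + (k:ℝ)))) *
              ((s + (m:ℝ)) * ((1-s) + (m:ℝ))) := by ring
          _ ≤ ((∏ k ∈ Finset.range m, ((2-2*s) + (k:ℝ))) * (m.factorial : ℝ)) *
              (((2-2*s) + (m:ℝ)) * ((m:ℝ) + 1)) := by
              have hRm : (0:ℝ) ≤ ∏ k ∈ Finset.range m, ((2-2*s) + (k:ℝ)) :=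
                Finset.prod_nonneg fun k _ => by
                  have : (0:ℝ) ≤ k := Nat.cast_nonneg k; linarith
              apply mul_le_mul ih hstep
                (mul_nonneg (by positivity) (by linarith)) (mul_nonneg hRm hfac)
          _ = (∏ k ∈ Finset.range m, ((2-2*s) + (k:ℝ))) * ((2-2*s) + (m:ℝ)) *
              (((m:ℝ) + 1) * (m.factorial : ℝ)) := by ring
    intro n
    rw [htn]
    have hRf : (0:ℝ) < (∏ k ∈ Finset.range n, ((2-2*s) + (k:ℝ))) * (n.factorial : ℝ) := by
      have hR : (0:ℝ) < ∏ k ∈ Finset.range n, ((2-2*s) + (k:ℝ)) :=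
        Finset.prod_pos fun k _ => by have : (0:ℝ) ≤ k := Nat.cast_nonneg k; linarith
      positivity
    have : (∏ k ∈ Finset.range n, (s + (k:ℝ))) * (∏ k ∈ Finset.range n, ((1-s) + (k:ℝ))) /
        ((∏ k ∈ Finset.range n, ((2-2*s) + (k:ℝ))) * (n.factorial : ℝ)) ≤ 1 := by
      rw [div_le_one hRf]
      exact hPQ n
    calc _ ≤ 1 * lam ^ n := by
          apply mul_le_mul_of_nonneg_right this (by positivity)
      _ = lam ^ n := one_mul _
  have htn_summable : Summable tn :=
    Summable.of_nonneg_of_le htn_nonneg htn_le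
      (summable_geometric_of_lt_one h0.le h1)
  -- the swap
  have hmeas : ∀ n : ℕ, AEStronglyMeasurable (F n) (volume.restrict (Set.Ioc (0:ℝ) 1)) := by
    intro n
    apply Measurable.aestronglyMeasurable
    fun_prop
  have hne : ∑' n : ℕ, ∫⁻ t, ‖F n t‖₊ ∂(volume.restrict (Set.Ioc (0:ℝ) 1)) ≠ ⊤ := by
    have heq : ∀ n : ℕ, ∫⁻ t, ‖F n t‖₊ ∂(volume.restrict (Set.Ioc (0:ℝ) 1)) =
        ENNReal.ofReal (D * tn n) := by
      intro n
      have hnn : 0 ≤ᵐ[volume.restrict (Set.Ioc (0:ℝ) 1)] F n := by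
        filter_upwards [ae_restrict_mem measurableSet_Ioc] with t ht
        rw [hF]
        simp only
        have h1t : (0:ℝ) ≤ 1 - t := by linarith [ht.2]
        have hP : (0:ℝ) ≤ ∏ k ∈ Finset.range n, (s + (k:ℝ)) :=
          Finset.prod_nonneg fun k _ => by positivity
        have := Real.rpow_nonneg ht.1.le ((n:ℝ) - s)
        have := Real.rpow_nonneg h1t (-s)
        positivity
      rw [← hV n, MeasureTheory.ofReal_integral_eq_lintegral_ofReal (hFion n) hnn]
      apply lintegral_congr_ae
      filter_upwards [hnn] with t ht
      exact Real.enorm_eq_ofReal ht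
    simp only [heq]
    rw [← ENNReal.ofReal_tsum_of_nonneg (fun n => mul_nonneg hDpos.le (htn_nonneg n))
      (htn_summable.mul_left D)]
    exact ENNReal.ofReal_ne_top
  have hswap := MeasureTheory.integral_tsum hmeas hne
  have hgI : ∫ t in Set.Ioc (0:ℝ) 1, g t = ∑' n, ∫ t in Set.Ioc (0:ℝ) 1, F n t := by
    rw [← hswap]
    apply setIntegral_congr_fun measurableSet_Ioc
    intro t ht
    exact ((hpt t ht).tsum_eq).symm
  rw [intervalIntegral.integral_of_le (by norm_num : (0:ℝ) ≤ 1)]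
  show ∫ t in Set.Ioc (0:ℝ) 1, g t = D * ∑' n, tn n
  rw [hgI]
  simp only [hV]
  exact tsum_mul_left

/-- For an integer `l ≥ 2` and real `0 < λ < 1`, the period
`Ω(C_{l,λ}) = 2^{2−l} ∫_0^λ (u(λ−u)(1−u))^{−(l−1)/l} du` equals
`Γ(1/l)² / (2^{l−2} λ^{(l−2)/l} Γ(2/l))` times the ordinary hypergeometric series
`₂F₁((l−1)/l, 1/l; 2/l | λ)` written with rising factorials. -/
theorem omega_eq_hypergeometric (l : ℕ) (hl : 2 ≤ l) (lam : ℝ)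
    (hlam0 : 0 < lam) (hlam1 : lam < 1) :
    (2 : ℝ) ^ ((2 : ℝ) - l) *
        ∫ u in (0 : ℝ)..lam, (u * (lam - u) * (1 - u)) ^ (-(((l : ℝ) - 1) / l)) =
      (Real.Gamma (1 / l)) ^ 2 /
          ((2 : ℝ) ^ ((l : ℝ) - 2) * lam ^ (((l : ℝ) - 2) / l) * Real.Gamma (2 / l)) *
        ∑' n : ℕ,
          (∏ k ∈ Finset.range n, (((l : ℝ) - 1) / l + k)) *
              (∏ k ∈ Finset.range n, (1 / (l : ℝ) + k)) /
            ((∏ k ∈ Finset.range n, (2 / (l : ℝ) + k)) * (n.factorial : ℝ)) *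
            lam ^ n := by
  have hl2 : (2:ℝ) ≤ (l:ℝ) := by exact_mod_cast hl
  have hlpos : (0:ℝ) < l := by linarith
  set s : ℝ := ((l:ℝ) - 1) / l with hs
  have hs0 : 0 < s := by rw [hs]; apply div_pos (by linarith) hlpos
  have hs1 : s < 1 := by rw [hs, div_lt_one hlpos]; linarith
  have h1s : 1 - s = 1 / (l:ℝ) := by rw [hs]; field_simp; ring
  have h2s : 2 - 2*s = 2 / (l:ℝ) := by rw [hs]; field_simp; ring
  have h3s : ((l:ℝ) - 2) / l = 2*s - 1 := by rw [hs]; field_simp; ring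
  set f : ℝ → ℝ := fun u => (u * (lam - u) * (1 - u)) ^ (-s) with hf
  -- substitution u = lam * t
  have hsub : (lam • ∫ t in (0:ℝ)..1, f (lam * t)) = ∫ u in (0:ℝ)..lam, f u := by
    have := intervalIntegral.smul_integral_comp_mul_left (a := (0:ℝ)) (b := 1) f lam
    simpa using this
  have hptw : ∫ t in (0:ℝ)..1, f (lam * t) =
      ∫ t in (0:ℝ)..1, (lam*lam) ^ (-s) * (t * (1 - t) * (1 - lam * t)) ^ (-s) := by
    apply intervalIntegral.integral_congr
    intro t ht
    rw [Set.uIcc_of_le (by norm_num : (0:ℝ) ≤ 1)] at ht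
    rw [hf]
    simp only
    rw [show lam * t * (lam - lam * t) * (1 - lam * t) =
      (lam * lam) * (t * (1 - t) * (1 - lam * t)) by ring]
    rw [Real.mul_rpow (by positivity) ?hnn]
    case hnn =>
      have h1t : (0:ℝ) ≤ 1 - t := by linarith [ht.2]
      have h2t : (0:ℝ) ≤ 1 - lam * t := by nlinarith [ht.1, ht.2]
      have := ht.1
      positivity
  have hInt : (∫ u in (0:ℝ)..lam, f u) =
      lam * ((lam*lam) ^ (-s) * (Real.Gamma (1-s)^2 / Real.Gamma (2-2*s) *
        ∑' n : ℕ, (∏ k ∈ Finset.range n, (s + k)) * (∏ k ∈ Finset.range n, ((1-s) + k)) /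
          ((∏ k ∈ Finset.range n, ((2-2*s) + k)) * (n.factorial : ℝ)) * lam ^ n)) := by
    rw [← hsub, hptw, intervalIntegral.integral_const_mul,
      key_integral hs0 hs1 hlam0 hlam1, smul_eq_mul]
  rw [← h1s, ← h2s, h3s]
  show (2:ℝ) ^ ((2:ℝ) - l) * ∫ u in (0:ℝ)..lam, f u = _
  rw [hInt]
  -- constant identity
  have hftwo : (0:ℝ) < (2:ℝ) ^ ((l:ℝ) - 2) := Real.rpow_pos_of_pos (by norm_num) _
  have hflam : (0:ℝ) < lam ^ (2*s - 1) := Real.rpow_pos_of_pos hlam0 _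
  have hGamma : (0:ℝ) < Real.Gamma (2 - 2*s) :=
    Real.Gamma_pos_of_pos (by linarith)
  have e2 : (2:ℝ) ^ ((2:ℝ) - l) = ((2:ℝ) ^ ((l:ℝ) - 2))⁻¹ := by
    rw [show (2:ℝ) - (l:ℝ) = -((l:ℝ) - 2) by ring, Real.rpow_neg (by norm_num)]
  have e1 : lam * (lam*lam) ^ (-s) = (lam ^ (2*s - 1))⁻¹ := by
    have hll : lam * lam = lam ^ (2:ℝ) := by
      rw [show (2:ℝ) = ((2:ℕ):ℝ) by norm_num, Real.rpow_natCast]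
      ring
    have key : lam ^ (2*s - 1) * (lam * (lam*lam) ^ (-s)) = 1 := by
      rw [hll, ← Real.rpow_mul hlam0.le]
      calc lam ^ (2*s - 1) * (lam * lam ^ ((2:ℝ) * (-s)))
          = lam ^ ((2*s - 1) + (1 + (2:ℝ) * (-s))) := by
            rw [Real.rpow_add hlam0, Real.rpow_add hlam0, Real.rpow_one]
        _ = 1 := by rw [show (2*s - 1) + (1 + (2:ℝ) * (-s)) = 0 by ring, Real.rpow_zero]
    exact eq_inv_of_mul_eq_one_left (by linear_combination key)
  have hconst : (2:ℝ) ^ ((2:ℝ) - l) * (lam * ((lam*lam) ^ (-s) *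
      (Real.Gamma (1-s)^2 / Real.Gamma (2-2*s)))) =
      Real.Gamma (1-s) ^ 2 / ((2:ℝ) ^ ((l:ℝ) - 2) * lam ^ (2*s - 1) * Real.Gamma (2 - 2*s)) := by
    rw [e2]
    rw [show lam * ((lam*lam) ^ (-s) * (Real.Gamma (1-s)^2 / Real.Gamma (2-2*s))) =
      (lam * (lam*lam) ^ (-s)) * (Real.Gamma (1-s)^2 / Real.Gamma (2-2*s)) by ring, e1]
    field_simp
  linear_combination hconst * (∑' n : ℕ, (∏ k ∈ Finset.range n, (s + k)) *
      (∏ k ∈ Finset.range n, ((1-s) + k)) /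
      ((∏ k ∈ Finset.range n, ((2-2*s) + k)) * (n.factorial : ℝ)) * lam ^ n)
end

section
/- Let p be a prime with p ≡ 1 (mod 3), let λ ∈ F_p with λ ≠ 0 and λ ≠ 1, and let χ be a multiplicative character of F_p of order 3 with values in ℂ. Then | 2 + ∑_{i=1}^{2} ∑_{t ∈ F_p} χ^i( t(t−1)(t−λ) ) | ≤ 2√p. (This is the paper's Corollary 3.4 for l = 3, stated there as |2 + p·∑_{i=1}^{2} χ^i(−λ²) ₂F₁(χ̄^i, χ^i; χ^{2i} | λ)| ≤ 2√p.) -/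
open Finset

variable {p : ℕ} [Fact p.Prime]

/-- A cubic character evaluated at a nonzero element has cube 1. -/
lemma cube_val (ψ : MulChar (ZMod p) ℂ) (h3 : ψ ^ 3 = 1) {x : ZMod p} (hx : x ≠ 0) :
    ψ x ^ 3 = 1 := by
  rw [← MulChar.pow_apply' ψ (by norm_num) x, h3,
    MulChar.one_apply (isUnit_iff_ne_zero.mpr hx)]

lemma psi_neg_one (ψ : MulChar (ZMod p) ℂ) (h3 : ψ ^ 3 = 1) : ψ (-1) = 1 := by
  have h2 : ψ (-1) ^ 2 = 1 := by
    rw [← map_pow]; norm_num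
  have hc : ψ (-1) ^ 3 = 1 := cube_val ψ h3 (by
    intro h
    exact one_ne_zero (by rw [← neg_neg (1 : ZMod p), h, neg_zero]))
  linear_combination hc - ψ (-1) * h2

/-- Main reduction: the cubic character sum is a unit times a Jacobi sum, minus 1. -/
lemma cubic_sum_eq (lam : ZMod p) (hlam0 : lam ≠ 0) (hlam1 : lam ≠ 1)
    (ψ : MulChar (ZMod p) ℂ) (h3 : ψ ^ 3 = 1) :
    ∑ t : ZMod p, ψ (t * (t - 1) * (t - lam)) =
      ψ lam ^ 2 * ψ (lam - 1) ^ 2 * jacobiSum ψ ψ - 1 := by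
  have hlam1' : lam - 1 ≠ 0 := sub_ne_zero.mpr hlam1
  -- Step B: reindex t ↦ lam * t⁻¹ over nonzero t
  have stepB : ∑ t : ZMod p, ψ (t * (t - 1) * (t - lam)) =
      ∑ t ∈ univ.erase (0 : ZMod p), ψ lam ^ 2 * (ψ (t - 1) * ψ (t - lam)) := by
    rw [← Finset.sum_erase_add univ _ (mem_univ (0 : ZMod p))]
    have h0 : ψ ((0 : ZMod p) * (0 - 1) * (0 - lam)) = 0 := by
      rw [zero_mul, zero_mul, MulChar.map_zero]
    rw [h0, add_zero]
    refine Finset.sum_nbij' (fun t => lam * t⁻¹) (fun t => lam * t⁻¹) ?_ ?_ ?_ ?_ ?_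
    · intro a ha
      simp only [mem_erase, mem_univ, and_true] at ha ⊢
      exact mul_ne_zero hlam0 (inv_ne_zero ha)
    · intro a ha
      simp only [mem_erase, mem_univ, and_true] at ha ⊢
      exact mul_ne_zero hlam0 (inv_ne_zero ha)
    · intro a ha
      simp only [mem_erase, mem_univ, and_true] at ha
      field_simp
    · intro a ha
      simp only [mem_erase, mem_univ, and_true] at ha
      field_simp
    · intro t ht
      simp only [mem_erase, mem_univ, and_true] at ht
      have hx : t * lam⁻¹ ≠ 0 := mul_ne_zero ht (inv_ne_zero hlam0)
      have key : t * (t - 1) * (t - lam)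
          = lam ^ 2 * ((lam * t⁻¹ - 1) * (lam * t⁻¹ - lam)) * (t * lam⁻¹) ^ 3 := by
        field_simp
        ring
      rw [key, map_mul, map_mul, map_mul, map_pow, map_pow, cube_val ψ h3 hx, mul_one]
  rw [stepB, ← Finset.mul_sum]
  -- Step C: add back the t = 0 term
  have stepC : ∑ t ∈ univ.erase (0 : ZMod p), ψ (t - 1) * ψ (t - lam) =
      (∑ t : ZMod p, ψ (t - 1) * ψ (t - lam)) - ψ lam := by
    rw [← Finset.sum_erase_add univ _ (mem_univ (0 : ZMod p))]
    have : ψ ((0 : ZMod p) - 1) * ψ (0 - lam) = ψ lam := by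
      rw [← map_mul]; congr 1; ring
    rw [this]; ring
  rw [stepC]
  -- Step D: reindex t = 1 + (lam - 1) * s
  have stepD : ∑ t : ZMod p, ψ (t - 1) * ψ (t - lam) =
      ψ (lam - 1) ^ 2 * ∑ s : ZMod p, ψ s * ψ (s - 1) := by
    rw [Finset.mul_sum]
    refine (Fintype.sum_bijective (fun s => 1 + (lam - 1) * s) ?_
      (fun s => ψ (lam - 1) ^ 2 * (ψ s * ψ (s - 1)))
      (fun t => ψ (t - 1) * ψ (t - lam)) ?_).symm
    · refine Function.bijective_iff_has_inverse.mpr ⟨fun t => (t - 1) / (lam - 1), ?_, ?_⟩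
      · intro s; field_simp; ring
      · intro t; field_simp; ring
    · intro s
      have h1 : (1 + (lam - 1) * s) - 1 = (lam - 1) * s := by ring
      have h2 : (1 + (lam - 1) * s) - lam = (lam - 1) * (s - 1) := by ring
      rw [h1, h2, map_mul, map_mul]
      ring
  rw [stepD]
  -- Step E: identify the Jacobi sum
  have stepE : ∑ s : ZMod p, ψ s * ψ (s - 1) = jacobiSum ψ ψ := by
    unfold jacobiSum
    refine Finset.sum_congr rfl fun s _ => ?_
    have : ψ (s - 1) = ψ (-1) * ψ (1 - s) := by
      rw [← map_mul]; congr 1; ring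
    rw [this, psi_neg_one ψ h3, one_mul]
  rw [stepE]
  have hl3 : ψ lam ^ 3 = 1 := cube_val ψ h3 hlam0
  linear_combination -hl3

lemma abs_val (ψ : MulChar (ZMod p) ℂ) (h3 : ψ ^ 3 = 1) {x : ZMod p} (hx : x ≠ 0) :
    ‖ψ x‖ = 1 := by
  have h : ‖ψ x‖ ^ 3 = 1 := by
    rw [← norm_pow, cube_val ψ h3 hx, norm_one]
  nlinarith [norm_nonneg (ψ x), sq_nonneg (‖ψ x‖ - 1),
    sq_nonneg (‖ψ x‖ + 1)]

lemma jac_abs (ψ : MulChar (ZMod p) ℂ) (h1 : ψ ≠ 1) (h2 : ψ * ψ ≠ 1) (h3 : ψ ^ 3 = 1) :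
    ‖jacobiSum ψ ψ‖ = Real.sqrt p := by
  have hchar : ringChar ℂ ≠ ringChar (ZMod p) := by
    rw [ringChar.eq_zero, ZMod.ringChar_zmod_n]
    exact fun h => (Fact.out : p.Prime).ne_zero h.symm
  have key := jacobiSum_mul_jacobiSum_inv hchar h1 h1 h2
  have hconj : jacobiSum ψ⁻¹ ψ⁻¹ = (starRingEnd ℂ) (jacobiSum ψ ψ) := by
    unfold jacobiSum
    rw [map_sum]
    refine Finset.sum_congr rfl fun x _ => ?_
    rw [map_mul]
    have hc : ∀ y : ZMod p, ψ⁻¹ y = (starRingEnd ℂ) (ψ y) := by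
      intro y
      by_cases hy : y = 0
      · rw [hy, MulChar.map_zero, MulChar.map_zero, map_zero]
      · rw [MulChar.inv_apply_eq_inv' ψ y, Complex.inv_eq_conj (abs_val ψ h3 hy)]
    rw [hc x, hc (1 - x)]
  rw [hconj, Complex.mul_conj, ZMod.card] at key
  have hnsq : Complex.normSq (jacobiSum ψ ψ) = p := by
    exact_mod_cast key
  rw [Complex.norm_def, hnsq]

/-- Corollary 3.4 of the paper, case `l = 3`: For a prime
`p ≡ 1 (mod 3)`, `λ ∈ F_p` with `λ ≠ 0, 1`, and `χ` of order `3`,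
`|2 + ∑_{i=1}^{2} ∑_t χ^i(t(t−1)(t−λ))| ≤ 2√p`. -/
theorem char_sum_hasse_bound_cubic (p : ℕ) [Fact p.Prime] (hp3 : p % 3 = 1)
    (lam : ZMod p) (hlam0 : lam ≠ 0) (hlam1 : lam ≠ 1)
    (χ : MulChar (ZMod p) ℂ) (hχ : orderOf χ = 3) :
    ‖(2 + ∑ i ∈ Finset.Icc 1 2, ∑ t : ZMod p,
        (χ ^ i) (t * (t - 1) * (t - lam)))‖ ≤ 2 * Real.sqrt p := by
  have hχ3 : χ ^ 3 = 1 := by rw [← hχ]; exact pow_orderOf_eq_one χ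
  have hχ1 : χ ≠ 1 := by
    intro h; rw [h, orderOf_one] at hχ; norm_num at hχ
  have hχ2 : χ ^ 2 ≠ 1 := by
    intro h
    have := orderOf_dvd_of_pow_eq_one h
    rw [hχ] at this
    norm_num at this
  have hsq3 : (χ ^ 2) ^ 3 = 1 := by
    rw [← pow_mul, show 2 * 3 = 3 * 2 by norm_num, pow_mul, hχ3, one_pow]
  have hlam1' : lam - 1 ≠ 0 := sub_ne_zero.mpr hlam1
  have hIcc : Finset.Icc 1 2 = ({1, 2} : Finset ℕ) := by decide
  rw [hIcc, Finset.sum_insert (by decide), Finset.sum_singleton, pow_one,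
    cubic_sum_eq lam hlam0 hlam1 χ hχ3, cubic_sum_eq lam hlam0 hlam1 (χ ^ 2) hsq3]
  have hre : (2 : ℂ) + (χ lam ^ 2 * χ (lam - 1) ^ 2 * jacobiSum χ χ - 1 +
      ((χ ^ 2) lam ^ 2 * (χ ^ 2) (lam - 1) ^ 2 * jacobiSum (χ ^ 2) (χ ^ 2) - 1)) =
      χ lam ^ 2 * χ (lam - 1) ^ 2 * jacobiSum χ χ +
      (χ ^ 2) lam ^ 2 * (χ ^ 2) (lam - 1) ^ 2 * jacobiSum (χ ^ 2) (χ ^ 2) := by ring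
  rw [hre]
  have habs : ∀ (ψ : MulChar (ZMod p) ℂ), ψ ≠ 1 → ψ * ψ ≠ 1 → ψ ^ 3 = 1 →
      ‖ψ lam ^ 2 * ψ (lam - 1) ^ 2 * jacobiSum ψ ψ‖ = Real.sqrt p := by
    intro ψ h1 h2 h3
    rw [norm_mul, norm_mul, norm_pow, norm_pow, abs_val ψ h3 hlam0, abs_val ψ h3 hlam1',
      jac_abs ψ h1 h2 h3]
    norm_num
  have b1 := habs χ hχ1 (by rwa [← sq]) hχ3
  have b2 := habs (χ ^ 2) hχ2 (by
    rw [← pow_add, show 2 + 2 = 3 + 1 by norm_num, pow_add, hχ3, one_mul, pow_one]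
    exact hχ1) hsq3
  calc ‖_‖ ≤ _ + _ := norm_add_le _ _
    _ ≤ 2 * Real.sqrt p := by rw [b1, b2]; ring_nf; rfl
end

section
/- Let p be a prime with p ≡ 1 (mod 3), let x and y be integers with x² + 3y² = p, and let χ be a multiplicative character of F_p of order 3 with values in ℂ. Then ∑_{i=1}^{2} ∑_{t ∈ F_p} χ^i( t(t−1)(t+1) ) = (−1)^{x+y} · (x|3) · 2x − 2, where (x|3) denotes the Legendre symbol of x modulo 3. (This is the paper's Corollary 3.5, stated there as p·∑_{i=1}^{2} ₂F₁(χ̄^i, χ^i; χ^{2i} | −1) = (−1)^{x+y}(x|3)·2x − 2; note χ^i(−1) = 1 since χ has odd order, and the Gaussian ₂F₁ values are expressed via the character sums.) -/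
open Complex

/-! Auxiliary: the primitive cube root of unity `ω` in `ℂ`. -/

noncomputable def om : ℂ := Complex.exp (2 * Real.pi * Complex.I / 3)

lemma om_prim : IsPrimitiveRoot om 3 := Complex.isPrimitiveRoot_exp 3 (by norm_num)

lemma om_cube : om ^ 3 = 1 := om_prim.pow_eq_one

lemma om_ne_one : om ≠ 1 := om_prim.ne_one (by norm_num)

lemma om_sq : om ^ 2 = -1 - om := by
  have h : (om - 1) * (om ^ 2 + om + 1) = 0 := by linear_combination om_cube
  rcases mul_eq_zero.mp h with h1 | h2
  · exact absurd (sub_eq_zero.mp h1) om_ne_one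
  · linear_combination h2

lemma om_im_ne : om.im ≠ 0 := by
  intro h
  have hre : om = (om.re : ℂ) := by
    apply Complex.ext <;> simp [h]
  have h2 : om.re ^ 2 + om.re + 1 = 0 := by
    have := om_sq
    rw [hre] at this
    have : ((om.re ^ 2 + om.re + 1 : ℝ) : ℂ) = 0 := by push_cast; linear_combination this
    exact_mod_cast this
  nlinarith [sq_nonneg (om.re + 1/2)]

lemma om_abs : ‖om‖ = 1 := by
  rw [om, Complex.norm_exp]
  norm_num

lemma om_conj : (starRingEnd ℂ) om = -1 - om := by
  have h1 : om⁻¹ = (starRingEnd ℂ) om := Complex.inv_eq_conj om_abs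
  have h3 : om * (-1 - om) = 1 := by linear_combination -om_sq
  rw [← h1]
  exact inv_eq_of_mul_eq_one_right h3

lemma coord_inj {a b a' b' : ℤ} (h : (a : ℂ) + b * om = a' + b' * om) : a = a' ∧ b = b' := by
  have him := congrArg Complex.im h
  simp only [Complex.add_im, Complex.mul_im, Complex.intCast_im, Complex.intCast_re,
    zero_mul, zero_add, add_zero, mul_zero] at him
  have hb : (b : ℝ) = b' := by
    have h' : om.im * ((b:ℝ) - b') = 0 := by linarith
    rcases mul_eq_zero.mp h' with h | h
    · exact absurd h om_im_ne
    · linarith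
  have hb' : b = b' := by exact_mod_cast hb
  subst hb'
  have := add_right_cancel h
  exact ⟨by exact_mod_cast this, rfl⟩

lemma mem_adjoin_om {z : ℂ} (hz : z ∈ Algebra.adjoin ℤ {om}) : ∃ a b : ℤ, z = a + b * om := by
  induction hz using Algebra.adjoin_induction with
  | mem w hw =>
    rcases hw with rfl
    exact ⟨0, 1, by push_cast; ring⟩
  | algebraMap r => exact ⟨r, 0, by push_cast; simp⟩
  | add u v _ _ hu hv =>
    obtain ⟨a, b, rfl⟩ := hu; obtain ⟨c, d, rfl⟩ := hv
    exact ⟨a + c, b + d, by push_cast; ring⟩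
  | mul u v _ _ hu hv =>
    obtain ⟨a, b, rfl⟩ := hu; obtain ⟨c, d, rfl⟩ := hv
    exact ⟨a * c - b * d, a * d + b * c - b * d, by push_cast; linear_combination (b * d : ℂ) * om_sq⟩

/-! Auxiliary: uniqueness of the representation `p = u² + 3v²`. -/

lemma repr_unique {p u v x y : ℤ} (hp : Prime p) (hp2 : 2 ≤ p)
    (h1 : u^2 + 3*v^2 = p) (h2 : x^2 + 3*y^2 = p) :
    u = x ∨ u = -x := by
  have key : p ∣ (u*y - v*x) * (u*y + v*x) := ⟨y^2 - v^2, by linear_combination y^2 * h1 - v^2 * h2⟩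
  have husq : u ^ 2 * p = x ^ 2 * p := by
    rcases hp.dvd_mul.mp key with hd | hd
    · have h0 : u*y - v*x = 0 := by
        by_contra hne
        have hge : p ≤ |u*y - v*x| := Int.le_of_dvd (abs_pos.mpr hne) ((dvd_abs p _).mpr hd)
        have hid : (u*x + 3*v*y)^2 + 3*(u*y - v*x)^2 = p^2 := by
          linear_combination (x^2 + 3*y^2) * h1 + (p : ℤ) * h2
        nlinarith [sq_nonneg (u*x + 3*v*y), _root_.sq_abs (u*y - v*x)]
      linear_combination x^2*h1 - u^2*h2 + 3*(u*y + v*x)*h0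
    · have h0 : u*y + v*x = 0 := by
        by_contra hne
        have hge : p ≤ |u*y + v*x| := Int.le_of_dvd (abs_pos.mpr hne) ((dvd_abs p _).mpr hd)
        have hid : (u*x - 3*v*y)^2 + 3*(u*y + v*x)^2 = p^2 := by
          linear_combination (x^2 + 3*y^2) * h1 + (p : ℤ) * h2
        nlinarith [sq_nonneg (u*x - 3*v*y), _root_.sq_abs (u*y + v*x)]
      linear_combination x^2*h1 - u^2*h2 + 3*(u*y - v*x)*h0
  have husq' : u ^ 2 = x ^ 2 := mul_right_cancel₀ (show (p:ℤ) ≠ 0 by omega) husq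
  have : (u - x) * (u + x) = 0 := by linear_combination husq'
  rcases mul_eq_zero.mp this with h | h
  · left; linarith
  · right; linarith

/-! Auxiliary: pairing lemma for sums with a fixed-point-free involution. -/

lemma even_sum_of_involution {α : Type*} [DecidableEq α] (R : Subalgebra ℤ ℂ) (f : α → ℂ)
    (g : α → α) (hgg : ∀ a, g (g a) = a) (hf : ∀ a, f (g a) = f a) (hfm : ∀ a, f a ∈ R) :
    ∀ s : Finset α, (∀ a ∈ s, g a ∈ s) → (∀ a ∈ s, g a ≠ a) →
    ∃ w ∈ R, ∑ a ∈ s, f a = 2 * w := by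
  have hginj : Function.Injective g := Function.Involutive.injective hgg
  intro s
  induction s using Finset.strongInduction with
  | H s ih =>
    intro hgs hne
    obtain rfl | ⟨x, hx⟩ := s.eq_empty_or_nonempty
    · exact ⟨0, zero_mem R, by simp⟩
    · have hsub : {x, g x} ⊆ s := by
        intro a ha
        rcases Finset.mem_insert.mp ha with rfl | ha
        · exact hx
        · rw [Finset.mem_singleton.mp ha]; exact hgs x hx
      have hssub : s \ {x, g x} ⊂ s :=
        Finset.sdiff_ssubset hsub ⟨x, Finset.mem_insert_self x _⟩
      have hgs' : ∀ a ∈ s \ {x, g x}, g a ∈ s \ {x, g x} := by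
        intro a ha
        rw [Finset.mem_sdiff] at ha ⊢
        obtain ⟨has, hax⟩ := ha
        simp only [Finset.mem_insert, Finset.mem_singleton] at hax ⊢
        push_neg at hax ⊢
        refine ⟨hgs a has, ?_, fun h => hax.1 (hginj h)⟩
        intro h
        exact hax.2 (by rw [← h, hgg])
      obtain ⟨w', hw'R, hw'⟩ := ih _ hssub hgs' (fun a ha => hne a (Finset.mem_sdiff.mp ha).1)
      refine ⟨w' + f x, add_mem hw'R (hfm x), ?_⟩
      rw [← Finset.sum_sdiff hsub, hw',
        Finset.sum_pair (Ne.symm (hne x hx)), hf x]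
      ring

section CharSums

variable {p : ℕ} [Fact p.Prime]

/-! Auxiliary: evaluation of the cubic character sum in terms of a Jacobi sum. -/

lemma sum_cubic (hp2 : (2 : ZMod p) ≠ 0) (φ : MulChar (ZMod p) ℂ) (h3 : φ ^ 3 = 1) :
    ∑ t : ZMod p, φ (t * (t - 1) * (t + 1)) = φ 4 * jacobiSum φ φ - 1 := by
  classical
  have hval : ∀ t : ZMod p, t ≠ 0 → φ t ^ 3 = 1 := by
    intro t ht
    have := congrArg (fun ψ : MulChar (ZMod p) ℂ => ψ t) h3
    simpa [MulChar.pow_apply', MulChar.one_apply (isUnit_iff_ne_zero.mpr ht)] using this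
  have einv : Function.Bijective (fun t : ZMod p => t⁻¹) :=
    Function.Involutive.bijective (fun t => inv_inv t)
  have step1 : ∑ t : ZMod p, φ (t * (t - 1) * (t + 1))
      = ∑ t : ZMod p, φ (t⁻¹ * (t⁻¹ - 1) * (t⁻¹ + 1)) :=
    (Function.Bijective.sum_comp einv fun t => φ (t * (t - 1) * (t + 1))).symm
  have step2 : ∀ t : ZMod p, t ≠ 0 →
      φ (t⁻¹ * (t⁻¹ - 1) * (t⁻¹ + 1)) = φ ((1 - t) * (1 + t)) := by
    intro t ht
    have hinv : t⁻¹ * t = 1 := inv_mul_cancel₀ ht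
    have h1 : t⁻¹ - 1 = t⁻¹ * (1 - t) := by field_simp
    have h2 : t⁻¹ + 1 = t⁻¹ * (1 + t) := by field_simp
    rw [h1, h2]
    rw [show t⁻¹ * (t⁻¹ * (1 - t)) * (t⁻¹ * (1 + t))
        = (t⁻¹ * t⁻¹ * t⁻¹) * ((1 - t) * (1 + t)) by ring]
    rw [map_mul, show t⁻¹ * t⁻¹ * t⁻¹ = t⁻¹ ^ 3 by ring, map_pow,
      hval t⁻¹ (inv_ne_zero ht), one_mul]
  have step3 : ∑ t : ZMod p, φ (t⁻¹ * (t⁻¹ - 1) * (t⁻¹ + 1))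
      = (∑ t : ZMod p, φ ((1 - t) * (1 + t))) - 1 := by
    rw [← Finset.sum_erase_add _ _ (Finset.mem_univ (0 : ZMod p)),
        ← Finset.sum_erase_add _ (fun t => φ ((1 - t) * (1 + t))) (Finset.mem_univ (0 : ZMod p))]
    simp only [inv_zero, zero_sub, zero_add, mul_zero, zero_mul, map_zero, add_zero, sub_zero]
    rw [Finset.sum_congr rfl (fun t ht => step2 t (Finset.ne_of_mem_erase ht))]
    simp
    exact MulChar.map_nonunit φ not_isUnit_zero
  have ebij : Function.Bijective (fun t : ZMod p => 2 * t + -1) :=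
    ((Equiv.mulLeft₀ (2 : ZMod p) hp2).trans (Equiv.addRight (-1 : ZMod p))).bijective
  have step4 : ∑ t : ZMod p, φ ((1 - t) * (1 + t)) = φ 4 * jacobiSum φ φ := by
    rw [← Function.Bijective.sum_comp ebij fun t => φ ((1 - t) * (1 + t))]
    have hpt : ∀ t : ZMod p, φ ((1 - (2 * t + -1)) * (1 + (2 * t + -1)))
        = φ 4 * (φ t * φ (1 - t)) := by
      intro t
      rw [show (1 - (2 * t + -1)) * (1 + (2 * t + -1)) = 4 * (t * (1 - t)) by ring,
        map_mul, map_mul]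
    simp only [hpt]
    rw [← Finset.mul_sum, jacobiSum]
  rw [step1, step3, step4]

/-! Auxiliary: the Jacobi sum `J(φ,φ)` is `φ(2⁻¹)² + 2·(element of ℤ[ω])`. -/

lemma jacobi_parity (hp2 : (2 : ZMod p) ≠ 0) (φ : MulChar (ZMod p) ℂ) (h3 : φ ^ 3 = 1) :
    ∃ w ∈ Algebra.adjoin ℤ {om}, jacobiSum φ φ = φ 2⁻¹ * φ 2⁻¹ + 2 * w := by
  classical
  set c : ZMod p := 2⁻¹ with hc
  have h2c : 2 * c = 1 := mul_inv_cancel₀ hp2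
  have hcc : 1 - c = c := by linear_combination -h2c
  obtain ⟨w, hwR, hw⟩ := even_sum_of_involution (Algebra.adjoin ℤ {om})
    (fun t => φ t * φ (1 - t)) (fun t => 1 - t) (fun a => by ring)
    (fun a => by simp only [sub_sub_cancel]; exact mul_comm _ _)
    (fun a => mul_mem (MulChar.apply_mem_algebraAdjoin_of_pow_eq_one h3 om_prim a)
      (MulChar.apply_mem_algebraAdjoin_of_pow_eq_one h3 om_prim (1 - a)))
    (Finset.univ.erase c)
    (fun a ha => by
      refine Finset.mem_erase.mpr ⟨?_, Finset.mem_univ _⟩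
      intro h
      exact (Finset.ne_of_mem_erase ha) (by rw [← hcc, ← h]; ring))
    (fun a ha => by
      intro h
      have h2a : 2 * a = 1 := by linear_combination -h
      exact (Finset.ne_of_mem_erase ha) (mul_left_cancel₀ hp2 (h2a.trans h2c.symm)))
  refine ⟨w, hwR, ?_⟩
  rw [jacobiSum, ← Finset.sum_erase_add _ _ (Finset.mem_univ c), hw, hcc]
  ring

end CharSums

/-- Corollary 3.5 of the paper: For a prime `p ≡ 1 (mod 3)` with
`x² + 3y² = p` and `χ` of order `3`,
`∑_{i=1}^{2} ∑_t χ^i(t(t−1)(t+1)) = (−1)^{x+y} (x|3) · 2x − 2`. -/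
theorem char_sum_eval_at_neg_one (p : ℕ) [Fact p.Prime] (hp3 : p % 3 = 1)
    (x y : ℤ) (hxy : x ^ 2 + 3 * y ^ 2 = (p : ℤ))
    (χ : MulChar (ZMod p) ℂ) (hχ : orderOf χ = 3) :
    ∑ i ∈ Finset.Icc 1 2, ∑ t : ZMod p,
        (χ ^ i) (t * (t - 1) * (t + 1)) =
      (-1 : ℂ) ^ (x + y) * (legendreSym 3 x : ℂ) * (2 * (x : ℂ)) - 2 := by
  classical
  have hp := (Fact.out : p.Prime)
  have hpne2 : p ≠ 2 := by omega
  have hp5 : 5 ≤ p := by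
    have h2 := hp.two_le
    have h4 : p ≠ 4 := by intro h; rw [h] at hp; norm_num at hp
    omega
  have hp2 : (2 : ZMod p) ≠ 0 := by
    intro h
    have hdvd : p ∣ 2 := (ZMod.natCast_eq_zero_iff 2 p).mp (by exact_mod_cast h)
    have := Nat.le_of_dvd (by norm_num) hdvd
    omega
  have h4ne : (4 : ZMod p) ≠ 0 := by
    intro h
    have hdvd : p ∣ 4 := (ZMod.natCast_eq_zero_iff 4 p).mp (by exact_mod_cast h)
    have := Nat.le_of_dvd (by norm_num) hdvd
    omega
  -- character facts
  have hχ3 : χ ^ 3 = 1 := by rw [← hχ]; exact pow_orderOf_eq_one χ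
  have hχ1 : χ ≠ 1 := by
    intro h; rw [h, orderOf_one] at hχ; omega
  have hχ2ne : χ ^ 2 ≠ 1 := by
    intro h
    have := orderOf_dvd_of_pow_eq_one h
    rw [hχ] at this
    omega
  have hinv : χ⁻¹ = χ ^ 2 := by
    have hmul : χ * χ ^ 2 = 1 := by rw [← pow_succ']; exact hχ3
    exact inv_eq_of_mul_eq_one_right hmul
  have h23 : (χ ^ 2) ^ 3 = 1 := by
    rw [← pow_mul, show 2 * 3 = 3 * 2 from rfl, pow_mul, hχ3, one_pow]
  -- the two character sums
  have hS1 := sum_cubic hp2 χ hχ3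
  have hS2 := sum_cubic hp2 (χ ^ 2) h23
  rw [show Finset.Icc 1 2 = ({1, 2} : Finset ℕ) from rfl,
    Finset.sum_pair (by norm_num : (1 : ℕ) ≠ 2)]
  simp only [pow_one]
  rw [hS1, hS2]
  -- notation
  set A : ℂ := χ 4 with hA
  set J : ℂ := jacobiSum χ χ with hJ
  -- conjugation facts
  have hcomp : χ.ringHomComp (starRingEnd ℂ) = χ ^ 2 := by
    rw [show χ.ringHomComp (starRingEnd ℂ) = star χ from rfl, MulChar.star_eq_inv, hinv]
  have hA2 : (χ ^ 2) (4 : ZMod p) = (starRingEnd ℂ) A := by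
    rw [← hcomp]; rfl
  have hA2' : (starRingEnd ℂ) A = A ^ 2 := by
    rw [← hA2, MulChar.pow_apply' χ two_ne_zero]
  have hJ2 : jacobiSum (χ ^ 2) (χ ^ 2) = (starRingEnd ℂ) J := by
    rw [← hcomp, jacobiSum_ringHomComp]
  rw [hA2, hJ2]
  -- T and its basic properties
  set T : ℂ := A * J with hT
  have hA3 : A ^ 3 = 1 := by
    rw [hA, ← MulChar.pow_apply' χ three_ne_zero, hχ3,
      MulChar.one_apply (isUnit_iff_ne_zero.mpr h4ne)]
  have hTconj : (starRingEnd ℂ) A * (starRingEnd ℂ) J = (starRingEnd ℂ) T := by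
    rw [hT, map_mul]
  rw [hTconj]
  -- Norm: T * conj T = p
  have hnorm : T * (starRingEnd ℂ) T = (p : ℂ) := by
    have hcc : ringChar ℂ ≠ ringChar (ZMod p) := by
      rw [ringChar.eq_zero, ZMod.ringChar_zmod_n]
      omega
    have hmulne : χ * χ ≠ 1 := by rwa [← sq]
    have hJJ := jacobiSum_mul_jacobiSum_inv hcc hχ1 hχ1 hmulne
    rw [ZMod.card] at hJJ
    have hJinv : jacobiSum χ⁻¹ χ⁻¹ = (starRingEnd ℂ) J := by rw [hinv, hJ2]
    rw [hJinv] at hJJ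
    have hAA : A * (starRingEnd ℂ) A = 1 := by
      rw [hA2']; linear_combination hA3
    calc T * (starRingEnd ℂ) T = (A * (starRingEnd ℂ) A) * (J * (starRingEnd ℂ) J) := by
          rw [hT, map_mul]; ring
      _ = (p : ℂ) := by rw [hAA, one_mul, hJJ]
  -- T ∈ ℤ[ω]
  have hTmem : T ∈ Algebra.adjoin ℤ {om} := by
    exact mul_mem (MulChar.apply_mem_algebraAdjoin_of_pow_eq_one hχ3 om_prim 4)
      (jacobiSum_mem_algebraAdjoin_of_pow_eq_one hχ3 hχ3 om_prim)
  obtain ⟨a, b, hab⟩ := mem_adjoin_om hTmem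
  -- conj T in coordinates
  have hconjT : (starRingEnd ℂ) T = (a : ℂ) + b * (-1 - om) := by
    rw [hab, map_add, map_mul, om_conj, map_intCast, map_intCast]
  -- norm in coordinates
  have hNint : a ^ 2 - a * b + b ^ 2 = (p : ℤ) := by
    have : ((a ^ 2 - a * b + b ^ 2 : ℤ) : ℂ) = (p : ℂ) := by
      push_cast
      rw [← hnorm, hconjT, hab]
      linear_combination ((b:ℂ)^2) * om_sq
    exact_mod_cast this
  -- parity: T = 1 + 2(e + f ω)
  have hparity : ∃ e f : ℤ, a = 1 + 2 * e ∧ b = 2 * f := by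
    obtain ⟨w, hwR, hw⟩ := jacobi_parity hp2 χ hχ3
    obtain ⟨e, f, hef⟩ := mem_adjoin_om
      (mul_mem (MulChar.apply_mem_algebraAdjoin_of_pow_eq_one hχ3 om_prim 4) hwR)
    have hone : A * (χ 2⁻¹ * χ 2⁻¹) = 1 := by
      rw [hA, ← map_mul, ← map_mul,
        show (4 : ZMod p) * (2⁻¹ * 2⁻¹) = (2 * 2⁻¹) * (2 * 2⁻¹) by ring,
        mul_inv_cancel₀ hp2, one_mul, map_one]
    have hTval : T = 1 + 2 * (A * w) := by
      rw [hT, hJ, hw, mul_add, hone]; ring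
    have : (a : ℂ) + b * om = ((1 + 2 * e : ℤ) : ℂ) + ((2 * f : ℤ) : ℂ) * om := by
      rw [← hab, hTval, hef]; push_cast; ring
    obtain ⟨h1, h2⟩ := coord_inj this
    exact ⟨e, f, h1, h2⟩
  -- mod 3: T = A(-1 + z(ω-1)²)
  have hmod3 : (a % 3 = 2 ∧ b % 3 = 0) ∨ (a % 3 = 0 ∧ b % 3 = 2) ∨ (a % 3 = 1 ∧ b % 3 = 1) := by
    obtain ⟨z, hzR, hz⟩ := exists_jacobiSum_eq_neg_one_add (by norm_num : 2 < 3) hχ3 hχ3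
      (by rw [ZMod.card]; omega) om_prim
    obtain ⟨g, h, hgh⟩ := mem_adjoin_om hzR
    have hTz : T = A * (-1 + ((g : ℂ) + h * om) * (om - 1) ^ 2) := by
      rw [hT, hJ, hz, hgh]
    have hcases : (A - 1) * ((A - om) * (A - (-1 - om))) = 0 := by
      linear_combination hA3 + (1 - A) * om_sq
    rcases mul_eq_zero.mp hcases with hA1 | hrest
    · left
      have hA1' : A = 1 := by linear_combination hA1
      rw [hA1', one_mul] at hTz
      have : (a : ℂ) + b * om = ((-1 + 3 * h : ℤ) : ℂ) + ((3 * (h - g) : ℤ) : ℂ) * om := by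
        push_cast
        linear_combination (-1 : ℂ) * hab + hTz + ((g : ℂ) + h * om - 3 * h) * om_sq
      obtain ⟨h1, h2⟩ := coord_inj this
      omega
    rcases mul_eq_zero.mp hrest with hAom | hAom2
    · right; left
      have hA1' : A = om := by linear_combination hAom
      rw [hA1'] at hTz
      have : (a : ℂ) + b * om = ((3 * (g - h) : ℤ) : ℂ) + ((3 * g - 1 : ℤ) : ℂ) * om := by
        push_cast
        linear_combination (-1 : ℂ) * hab + hTz + (om * ((g : ℂ) + h * om - 3 * h) + 3 * h - 3 * g) * om_sq
      obtain ⟨h1, h2⟩ := coord_inj this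
      omega
    · right; right
      have hA1' : A = -1 - om := by linear_combination hAom2
      rw [hA1'] at hTz
      have : (a : ℂ) + b * om = ((1 - 3 * g : ℤ) : ℂ) + ((1 - 3 * h : ℤ) : ℂ) * om := by
        push_cast
        linear_combination (-1 : ℂ) * hab + hTz + ((-1 - om) * ((g : ℂ) + h * om - 3 * h) + 3 * g - 3 * h) * om_sq
      obtain ⟨h1, h2⟩ := coord_inj this
      omega
  -- assemble the integer facts
  obtain ⟨e, f, ha_e, hb_f⟩ := hparity
  have hN2 : (a - f) ^ 2 + 3 * f ^ 2 = (p : ℤ) := by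
    linear_combination hNint + (a - b - 2*f) * hb_f
  have hu3 : (a - f) % 3 = 2 := by
    rcases hmod3 with ⟨h1, h2⟩ | ⟨h1, h2⟩ | ⟨h1, h2⟩ <;> omega
  have hP : Prime (p : ℤ) := Nat.prime_iff_prime_int.mp hp
  have hu := repr_unique hP (by exact_mod_cast hp.two_le) hN2 hxy
  -- Legendre symbol facts
  haveI : Fact (Nat.Prime 3) := ⟨by norm_num⟩
  have hx3 : (x : ZMod 3) ≠ 0 := by
    intro h
    obtain ⟨k, hk⟩ := (ZMod.intCast_zmod_eq_zero_iff_dvd x 3).mp h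
    have h3p : (3 : ℤ) ∣ (p : ℤ) := ⟨3 * k ^ 2 + y ^ 2, by rw [← hxy, hk]; ring⟩
    have : (3 : ℕ) ∣ p := by exact_mod_cast h3p
    omega
  have hl1 : legendreSym 3 x = 1 ∨ legendreSym 3 x = -1 := legendreSym.eq_one_or_neg_one 3 hx3
  have hlp : ((legendreSym 3 x : ℤ) : ZMod 3) = (x : ZMod 3) := by
    have := legendreSym.eq_pow 3 x
    rw [show (3 / 2 : ℕ) = 1 by norm_num, pow_one] at this
    exact_mod_cast this
  have hl3 : legendreSym 3 x % 3 = x % 3 := by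
    have := (ZMod.intCast_eq_intCast_iff' (legendreSym 3 x) x 3).mp hlp
    exact_mod_cast this
  have hux : a - f = -(legendreSym 3 x * x) := by
    rcases hl1 with h | h <;> rcases hu with h' | h' <;> rw [h] <;> omega
  have hfin : (2 * a - b : ℤ) = -(legendreSym 3 x * (2 * x)) := by
    linear_combination 2 * hux - hb_f
  -- parity of x + y
  have hpodd : Odd (p : ℤ) := by
    have : Odd p := hp.odd_of_ne_two hpne2
    exact_mod_cast this
  have hodd : Odd (x + y) := by
    rcases Int.even_or_odd x with ⟨k, hk⟩ | ⟨k, hk⟩ <;>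
      rcases Int.even_or_odd y with ⟨m, hm⟩ | ⟨m, hm⟩
    · exfalso
      obtain ⟨n, hn⟩ := hpodd
      rw [← hxy, hk, hm] at hn
      have h2K : (2 : ℤ) * (2*k^2 + 6*m^2) = 2*n + 1 := by linear_combination hn
      omega
    · rw [hk, hm]; exact ⟨k + m, by ring⟩
    · rw [hk, hm]; exact ⟨k + m, by ring⟩
    · exfalso
      obtain ⟨n, hn⟩ := hpodd
      rw [← hxy, hk, hm] at hn
      have h2K : (2 : ℤ) * (2*k^2 + 2*k + 6*m^2 + 6*m + 2) = 2*n + 1 := by linear_combination hn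
      omega
  have hsign : ((-1 : ℂ)) ^ (x + y) = -1 := Odd.neg_one_zpow hodd
  -- final computation in ℂ
  rw [hconjT, hab, hsign]
  have hfinC : ((2 * a - b : ℤ) : ℂ) = -(((legendreSym 3 x : ℤ) : ℂ) * (2 * (x : ℂ))) := by
    exact_mod_cast congrArg (Int.cast : ℤ → ℂ) hfin
  push_cast at hfinC
  linear_combination hfinC
end

section
/- Let l ≥ 2 be an integer. Then the period Ω(C_{l,1/2}) = 2^{2−l} ∫_0^{1/2} (u(1/2−u)(1−u))^{−(l−1)/l} du satisfies 2^{(l−3)(l−1)/l} · Γ(2/l) / (Γ(1/l))² · Ω(C_{l,1/2}) = Γ(2/l)·Γ((2l+1)/(2l)) / ( Γ((l+1)/l)·Γ(3/(2l)) ), where Γ is the real Gamma function. (The right-hand side equals the ratio of generalized binomial coefficients (1/(2l) choose 1/l) / ((3−2l)/(2l) choose (2−l)/l), where (n choose k) := Γ(n+1)/(Γ(k+1)Γ(n−k+1)).) -/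
open MeasureTheory

lemma real_beta (a b : ℝ) (ha : 0 < a) (hb : 0 < b) :
    ∫ x in (0:ℝ)..1, x ^ (a-1) * (1-x) ^ (b-1) =
      Real.Gamma a * Real.Gamma b / Real.Gamma (a+b) := by
  have key := Complex.Gamma_mul_Gamma_eq_betaIntegral (s := (a:ℂ)) (t := (b:ℂ))
    (by simpa using ha) (by simpa using hb)
  have hcast : Complex.betaIntegral (a:ℂ) (b:ℂ) =
      ((∫ x in (0:ℝ)..1, x ^ (a-1) * (1-x) ^ (b-1) : ℝ) : ℂ) := by
    rw [Complex.betaIntegral, ← intervalIntegral.integral_ofReal]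
    refine intervalIntegral.integral_congr fun x hx => ?_
    rw [Set.uIcc_of_le (by norm_num : (0:ℝ) ≤ 1)] at hx
    obtain ⟨hx0, hx1⟩ := hx
    rw [show ((a:ℂ)-1) = ((a-1:ℝ):ℂ) by push_cast; ring,
      show ((b:ℂ)-1) = ((b-1:ℝ):ℂ) by push_cast; ring,
      show (1 - (x:ℂ)) = ((1-x:ℝ):ℂ) by push_cast; ring,
      ← Complex.ofReal_cpow hx0, ← Complex.ofReal_cpow (by linarith : (0:ℝ) ≤ 1-x),
      ← Complex.ofReal_mul]
  rw [hcast, ← Complex.ofReal_add, Complex.Gamma_ofReal, Complex.Gamma_ofReal,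
    Complex.Gamma_ofReal, ← Complex.ofReal_mul, ← Complex.ofReal_mul] at key
  have hR : Real.Gamma a * Real.Gamma b =
      Real.Gamma (a+b) * ∫ x in (0:ℝ)..1, x ^ (a-1) * (1-x) ^ (b-1) := by
    exact_mod_cast key
  have hG : Real.Gamma (a+b) ≠ 0 := (Real.Gamma_pos_of_pos (by linarith)).ne'
  field_simp [hG] at hR ⊢
  linarith [hR]

lemma four_rpow (x : ℝ) : (4:ℝ) ^ x = 2 ^ (2*x) := by
  rw [show (4:ℝ) = (2:ℝ)^(2:ℕ) by norm_num, ← Real.rpow_natCast 2 2,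
    ← Real.rpow_mul (by norm_num)]
  norm_num

lemma half_integral (a : ℝ) (ha : 0 < a) (ha1 : a < 1) :
    ∫ u in (0:ℝ)..(1/2:ℝ), (u*(1/2-u)*(1-u)) ^ (a-1)
      = 2 ^ (1-3*a) * (Real.Gamma a * Real.Gamma (a/2) / Real.Gamma (3*a/2)) := by
  set φ : ℝ → ℝ := fun u => 4*u*(1-u) with hφ
  have himg : φ '' Set.Ioo 0 (1/2) = Set.Ioo 0 1 := by
    ext t
    constructor
    · rintro ⟨u, ⟨hu0, hu2⟩, rfl⟩
      refine ⟨by simp only [hφ]; nlinarith, by simp only [hφ]; nlinarith⟩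
    · rintro ⟨ht0, ht1⟩
      have hs0 : 0 < Real.sqrt (1-t) := Real.sqrt_pos.mpr (by linarith)
      have hs1 : Real.sqrt (1-t) < 1 := by
        nlinarith [Real.sq_sqrt (by linarith : (0:ℝ) ≤ 1-t), hs0]
      have hsq : Real.sqrt (1-t) ^ 2 = 1 - t := Real.sq_sqrt (by linarith)
      exact ⟨(1 - Real.sqrt (1-t))/2, ⟨by linarith, by linarith⟩, by
        simp only [hφ]; nlinarith [hsq]⟩
  have hderiv : ∀ u ∈ Set.Ioo (0:ℝ) (1/2),
      HasDerivWithinAt φ (4-8*u) (Set.Ioo 0 (1/2)) u := by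
    intro u _
    have h1 : HasDerivAt (fun u : ℝ => 4*u*(1-u)) (4*(1*(1-u) + u*(-(1)))) u := by
      have := ((hasDerivAt_id u).mul ((hasDerivAt_const u 1).sub (hasDerivAt_id u))).const_mul (4:ℝ)
      simpa [mul_assoc] using this
    have h2 : HasDerivAt φ (4-8*u) u := by
      convert h1 using 1; ring
    exact h2.hasDerivWithinAt
  have hinj : Set.InjOn φ (Set.Ioo 0 (1/2)) := by
    rintro u ⟨hu0, hu2⟩ v ⟨hv0, hv2⟩ h
    simp only [hφ] at h
    have h2 : (u - v) * (1 - (u+v)) = 0 := by linear_combination h/4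
    rcases mul_eq_zero.mp h2 with h3 | h3
    · linarith
    · linarith
  have hcov := integral_image_eq_integral_abs_deriv_smul measurableSet_Ioo hderiv hinj
    (fun t => t ^ (a-1) * (1-t) ^ (a/2-1))
  rw [himg] at hcov
  have hbeta := real_beta a (a/2) ha (by linarith)
  rw [intervalIntegral.integral_of_le (by norm_num : (0:ℝ) ≤ 1),
    MeasureTheory.integral_Ioc_eq_integral_Ioo] at hbeta
  rw [intervalIntegral.integral_of_le (by norm_num : (0:ℝ) ≤ 1/2),
    MeasureTheory.integral_Ioc_eq_integral_Ioo]
  have hpt : Set.EqOn (fun u : ℝ => (u*(1/2-u)*(1-u)) ^ (a-1))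
      (fun u : ℝ => 2 ^ (1-3*a) * (|4-8*u| • (φ u ^ (a-1) * (1 - φ u) ^ (a/2-1))))
      (Set.Ioo 0 (1/2)) := by
    rintro u ⟨hu0, hu2⟩
    have h2u : (0:ℝ) < 1 - 2*u := by linarith
    have h1u : (0:ℝ) < 1 - u := by linarith
    simp only [hφ, smul_eq_mul]
    have habs : |4 - 8*u| = 4*(1-2*u) := by rw [abs_of_pos (by linarith)]; ring
    have hL : (u*(1/2-u)*(1-u)) ^ (a-1)
        = 2 ^ (1-a) * (u ^ (a-1) * ((1-u) ^ (a-1) * (1-2*u) ^ (a-1))) := by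
      rw [show u*(1/2-u)*(1-u) = (2:ℝ)⁻¹ * (u*((1-u)*(1-2*u))) by ring,
        Real.mul_rpow (by norm_num) (by positivity),
        Real.mul_rpow hu0.le (by positivity),
        Real.mul_rpow h1u.le h2u.le,
        Real.inv_rpow (by norm_num : (0:ℝ) ≤ 2), ← Real.rpow_neg (by norm_num),
        show -(a-1) = 1-a by ring]
    have hsq : (1:ℝ) - 4*u*(1-u) = (1-2*u)^(2:ℕ) := by ring
    have hpow2 : ((1-2*u)^(2:ℕ) : ℝ) ^ (a/2-1) = (1-2*u) ^ (a-2) := by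
      rw [← Real.rpow_natCast (1-2*u) 2, ← Real.rpow_mul h2u.le]
      congr 1
      push_cast
      ring
    have h4 : ((4*u*(1-u)) : ℝ) ^ (a-1) = 4 ^ (a-1) * (u ^ (a-1) * (1-u) ^ (a-1)) := by
      rw [show (4:ℝ)*u*(1-u) = 4*(u*(1-u)) by ring,
        Real.mul_rpow (by norm_num) (by positivity),
        Real.mul_rpow hu0.le h1u.le]
    rw [hL, hsq, hpow2, habs, h4, four_rpow]
    have hcomb : (1-2*u) * (1-2*u) ^ (a-2) = (1-2*u) ^ (a-1) := by
      nth_rewrite 1 [← Real.rpow_one (1-2*u)]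
      rw [← Real.rpow_add h2u]
      congr 1
      ring
    have h2pow : (2:ℝ) ^ (1-3*a) * 4 * 2 ^ (2*(a-1)) = 2 ^ (1-a) := by
      rw [show (4:ℝ) = 2^(2:ℕ) by norm_num, ← Real.rpow_natCast 2 2,
        ← Real.rpow_add (by norm_num : (0:ℝ) < 2), ← Real.rpow_add (by norm_num : (0:ℝ) < 2)]
      push_cast
      congr 1
      ring
    calc 2 ^ (1-a) * (u ^ (a-1) * ((1-u) ^ (a-1) * (1-2*u) ^ (a-1)))
        = (2 ^ (1-3*a) * 4 * 2 ^ (2*(a-1))) * (u ^ (a-1) * ((1-u) ^ (a-1)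
            * ((1-2*u) * (1-2*u) ^ (a-2)))) := by rw [h2pow, hcomb]
      _ = 2 ^ (1-3*a) * (4*(1-2*u) * (2 ^ (2*(a-1)) * (u ^ (a-1) * (1-u) ^ (a-1))
            * (1-2*u) ^ (a-2))) := by ring
  rw [MeasureTheory.setIntegral_congr_fun measurableSet_Ioo hpt,
    MeasureTheory.integral_const_mul, ← hcov, hbeta,
    show a + a/2 = 3*a/2 by ring]

/-- For an integer `l ≥ 2`, the period
`Ω(C_{l,1/2}) = 2^{2−l} ∫_0^{1/2} (u(1/2−u)(1−u))^{−(l−1)/l} du` satisfies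
`2^{(l−3)(l−1)/l} Γ(2/l)/Γ(1/l)² · Ω(C_{l,1/2})
  = Γ(2/l)Γ((2l+1)/(2l)) / (Γ((l+1)/l)Γ(3/(2l)))`. -/
theorem omega_half_eq_gamma_ratio (l : ℕ) (hl : 2 ≤ l) :
    (2 : ℝ) ^ ((((l : ℝ) - 3) * ((l : ℝ) - 1)) / l) * Real.Gamma (2 / l) /
        (Real.Gamma (1 / l)) ^ 2 *
        ((2 : ℝ) ^ ((2 : ℝ) - l) *
          ∫ u in (0 : ℝ)..(1 / 2 : ℝ),
            (u * (1 / 2 - u) * (1 - u)) ^ (-(((l : ℝ) - 1) / l))) =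
      Real.Gamma (2 / l) * Real.Gamma ((2 * l + 1) / (2 * l)) /
        (Real.Gamma (((l : ℝ) + 1) / l) * Real.Gamma (3 / (2 * l))) := by
  have hl2 : (2:ℝ) ≤ l := by exact_mod_cast hl
  have hl0 : (0:ℝ) < l := by linarith
  have hlne : (l:ℝ) ≠ 0 := hl0.ne'
  have ha : 0 < 1/(l:ℝ) := by positivity
  have ha1 : 1/(l:ℝ) < 1 := by rw [div_lt_one hl0]; linarith
  have hexp : -(((l:ℝ) - 1) / l) = 1/(l:ℝ) - 1 := by field_simp; ring
  rw [hexp, half_integral (1/(l:ℝ)) ha ha1,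
    show ((1:ℝ)/l)/2 = 1/(2*l) by ring, show (3:ℝ)*(1/(l:ℝ))/2 = 3/(2*l) by ring,
    show ((2*(l:ℝ)+1))/(2*l) = 1/(2*(l:ℝ)) + 1 by field_simp; ring,
    show (((l:ℝ)+1))/l = 1/(l:ℝ) + 1 by field_simp; ring,
    Real.Gamma_add_one (by positivity : (1:ℝ)/(2*(l:ℝ)) ≠ 0),
    Real.Gamma_add_one (by positivity : (1:ℝ)/(l:ℝ) ≠ 0),
    show (1:ℝ) - 3*(1/(l:ℝ)) = ((l:ℝ)-3)/l by field_simp]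
  have hpow : (2:ℝ) ^ (((l:ℝ) - 3) * ((l:ℝ) - 1) / l) * 2 ^ ((2:ℝ) - l) * 2 ^ (((l:ℝ)-3)/l)
      = 1/2 := by
    rw [← Real.rpow_add (by norm_num : (0:ℝ) < 2),
      ← Real.rpow_add (by norm_num : (0:ℝ) < 2),
      show ((l:ℝ) - 3) * ((l:ℝ) - 1) / l + ((2:ℝ) - l) + (((l:ℝ)-3)/l) = -1 by
        field_simp; ring,
      Real.rpow_neg_one]
    norm_num
  have hG1 : Real.Gamma (1/(l:ℝ)) ≠ 0 := (Real.Gamma_pos_of_pos (by positivity)).ne'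
  have hG3 : Real.Gamma (3/(2*(l:ℝ))) ≠ 0 := (Real.Gamma_pos_of_pos (by positivity)).ne'
  field_simp
  linear_combination (2:ℝ) * hpow
end

section
/- Let l ≥ 2 be an integer with l ≠ 3, let p be an odd prime with p ≡ 1 (mod l) such that (p−1)/l is odd, let χ be a multiplicative character of F_p of order l with values in ℂ, and let φ be the quadratic character of F_p. Then N_l(1/2) = p + ∑_{i=1}^{⌊(l−1)/2⌋} χ^{2i}(−1) · χ^{−2i}(8) · ( J(χ^i, χ^{2i}) + J(φχ^i, χ^{2i}) ), where 1/2 denotes the inverse of 2 in F_p. (This is the odd case of the paper's Theorem 1.8, formula (1.10), stated there as −a_p(C_{l,1/2}) = p·∑_{i=1}^{⌊(l−1)/2⌋} χ^{−2i}(8) [ (χ^i choose χ^{−2i}) + (φχ^i choose χ^{−2i}) ], translated via (A choose B) = B(−1)/p · J(A, B̄) and a_p = p − N_l(1/2).) -/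
open Finset Polynomial

namespace PointCountAux

variable {p : ℕ} [Fact p.Prime]

lemma exists_gen : ∃ g : (ZMod p)ˣ, orderOf g = p - 1 ∧ ∀ u : (ZMod p)ˣ, ∃ n : ℕ, g ^ n = u := by
  obtain ⟨g, hg⟩ := IsCyclic.exists_generator (α := (ZMod p)ˣ)
  refine ⟨g, ?_, fun u => ?_⟩
  · rw [orderOf_eq_card_of_forall_mem_zpowers hg, Nat.card_eq_fintype_card,
      ZMod.card_units_eq_totient, Nat.totient_prime (Fact.out : p.Prime)]
  · exact mem_powers_iff_mem_zpowers.mpr (hg u)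

lemma char_eq_one_iff {l : ℕ}
    (χ : MulChar (ZMod p) ℂ) (hχ : orderOf χ = l) (a : (ZMod p)ˣ) :
    χ ↑a = 1 ↔ ∃ b : (ZMod p)ˣ, b ^ l = a := by
  obtain ⟨g, hgord, hg⟩ := exists_gen (p := p)
  have h1 : χ ↑g ^ l = 1 := by
    rw [← MulChar.pow_apply_coe, ← hχ, pow_orderOf_eq_one, MulChar.one_apply_coe]
  have hord : orderOf (χ ↑g) = l := by
    refine Nat.dvd_antisymm (orderOf_dvd_of_pow_eq_one h1) ?_
    rw [← hχ]
    refine orderOf_dvd_of_pow_eq_one (MulChar.ext fun u => ?_)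
    obtain ⟨n, hn⟩ := hg u
    rw [MulChar.pow_apply_coe, MulChar.one_apply_coe, ← hn, Units.val_pow_eq_pow_val,
      map_pow, ← pow_mul, mul_comm, pow_mul, pow_orderOf_eq_one, one_pow]
  constructor
  · intro h
    obtain ⟨n, hn⟩ := hg a
    rw [← hn, Units.val_pow_eq_pow_val, map_pow] at h
    have hdvd := orderOf_dvd_of_pow_eq_one h
    rw [hord] at hdvd
    obtain ⟨w, hw⟩ := hdvd
    exact ⟨g ^ w, by rw [← hn, hw, ← pow_mul, mul_comm]⟩
  · rintro ⟨b, rfl⟩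
    have hχl : χ ^ l = 1 := by rw [← hχ]; exact pow_orderOf_eq_one χ
    rw [Units.val_pow_eq_pow_val, map_pow, ← MulChar.pow_apply_coe, hχl, MulChar.one_apply_coe]


lemma exists_prim_root {l : ℕ} (hl0 : l ≠ 0) (hld : l ∣ p - 1) :
    ∃ ζ : ZMod p, IsPrimitiveRoot ζ l := by
  obtain ⟨g, hgord, -⟩ := exists_gen (p := p)
  obtain ⟨m, hm⟩ := hld
  have hp1 : 0 < p - 1 := by
    have := (Fact.out : p.Prime).two_le
    omega
  have hg : IsPrimitiveRoot (g : ZMod p) (p - 1) := by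
    refine IsPrimitiveRoot.coe_units_iff.mpr ?_
    rw [← hgord]
    exact IsPrimitiveRoot.orderOf g
  exact ⟨(g : ZMod p) ^ m, hg.pow hp1 (by rw [hm, mul_comm])⟩


lemma count_pow_eq {l : ℕ} (hl0 : l ≠ 0) (hld : l ∣ p - 1)
    (χ : MulChar (ZMod p) ℂ) (hχ : orderOf χ = l) (a : ZMod p) :
    ((univ.filter fun y : ZMod p => y ^ l = a).card : ℂ)
      = (if a = 0 then 1 else 0) + ∑ j ∈ range l, (χ ^ j) a := by
  rcases eq_or_ne a 0 with rfl | ha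
  · have hfil : (univ.filter fun y : ZMod p => y ^ l = 0) = {0} := by
      ext y
      simp [pow_eq_zero_iff hl0]
    rw [hfil]
    simp [MulChar.map_zero]
  · have haU : IsUnit a := isUnit_iff_ne_zero.mpr ha
    have hpow : ∀ j : ℕ, (χ ^ j) a = χ a ^ j := by
      intro j
      conv_lhs => rw [← haU.unit_spec]
      rw [MulChar.pow_apply_coe, haU.unit_spec]
    rw [if_neg ha]
    obtain ⟨ζ, hζ⟩ := exists_prim_root hl0 hld
    by_cases hex : ∃ α : ZMod p, α ^ l = a
    · obtain ⟨α, hα⟩ := hex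
      have hα0 : α ≠ 0 := by rintro rfl; rw [zero_pow hl0] at hα; exact ha hα.symm
      have hcard : (univ.filter fun y : ZMod p => y ^ l = a)
          = (Polynomial.nthRootsFinset l (1 : ZMod p)).image (fun z => α * z) := by
        ext y
        simp only [mem_filter, mem_univ, true_and, mem_image]
        constructor
        · intro hy
          refine ⟨α⁻¹ * y, ?_, by field_simp⟩
          rw [Polynomial.mem_nthRootsFinset (Nat.pos_of_ne_zero hl0)]
          rw [mul_pow, hy, ← hα, inv_pow, inv_mul_cancel₀ (pow_ne_zero _ hα0)]
        · rintro ⟨z, hz, rfl⟩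
          rw [Polynomial.mem_nthRootsFinset (Nat.pos_of_ne_zero hl0)] at hz
          rw [mul_pow, hz, mul_one, hα]
      have hinj : Set.InjOn (fun z => α * z) (Polynomial.nthRootsFinset l (1 : ZMod p)) :=
        fun x _ y _ h => mul_left_cancel₀ hα0 h
      rw [hcard, Finset.card_image_of_injOn hinj, hζ.card_nthRootsFinset]
      have h1 : χ a = 1 := by
        have hb : ∃ b : (ZMod p)ˣ, b ^ l = haU.unit := by
          refine ⟨(isUnit_iff_ne_zero.mpr hα0).unit, ?_⟩
          ext
          push_cast
          rw [(isUnit_iff_ne_zero.mpr hα0).unit_spec, hα, haU.unit_spec]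
        have := (char_eq_one_iff χ hχ haU.unit).mpr hb
        rwa [haU.unit_spec] at this
      simp [hpow, h1]
    · have hfil : (univ.filter fun y : ZMod p => y ^ l = a) = ∅ := by
        ext y
        simp only [mem_filter, mem_univ, true_and, notMem_empty, iff_false]
        exact fun hy => hex ⟨y, hy⟩
      have hne : χ a ≠ 1 := by
        intro h1
        obtain ⟨b, hb⟩ := (char_eq_one_iff χ hχ haU.unit).mp (by rwa [haU.unit_spec])
        exact hex ⟨(b : ZMod p), by rw [← Units.val_pow_eq_pow_val, hb, haU.unit_spec]⟩
      have hgeom : ∑ j ∈ range l, χ a ^ j = 0 := by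
        rw [geom_sum_eq hne]
        have hl1 : χ a ^ l = 1 := by
          have hχl : χ ^ l = 1 := by rw [← hχ]; exact pow_orderOf_eq_one χ
          rw [← hpow, hχl, MulChar.one_apply haU]
        rw [hl1, sub_self, zero_div]
      rw [hfil]
      simp only [Finset.card_empty, Nat.cast_zero]
      rw [Finset.sum_congr rfl fun j _ => hpow j, hgeom, add_zero]


lemma chi_neg_one {l : ℕ} (hp2 : p ≠ 2) (hld : l ∣ p - 1) (hm : Odd ((p - 1) / l))
    (χ : MulChar (ZMod p) ℂ) (hχ : orderOf χ = l) : χ (-1) = -1 := by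
  have hplt : 2 < p := lt_of_le_of_ne (Fact.out : p.Prime).two_le (Ne.symm hp2)
  haveI : Fact (2 < p) := ⟨hplt⟩
  have hne : (-1 : ZMod p) ≠ 1 := ZMod.neg_one_ne_one
  have hu : χ (-1) * χ (-1) = 1 := by
    rw [← map_mul, neg_mul_neg, one_mul, map_one]
  rcases mul_self_eq_one_iff.mp hu with h | h
  · exfalso
    have h1 : χ ((-1 : (ZMod p)ˣ) : ZMod p) = 1 := by
      rwa [Units.val_neg, Units.val_one]
    obtain ⟨b, hb⟩ := (char_eq_one_iff χ hχ (-1)).mp h1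
    have hcard : b ^ (p - 1) = 1 := by
      have h := pow_card_eq_one (x := b)
      rwa [ZMod.card_units_eq_totient, Nat.totient_prime (Fact.out : p.Prime)] at h
    have hml : l * ((p - 1) / l) = p - 1 := Nat.mul_div_cancel' hld
    have hmain : ((-1 : (ZMod p)ˣ)) ^ ((p - 1) / l) = 1 := by
      rw [← hb, ← pow_mul, hml, hcard]
    rw [Odd.neg_one_pow hm] at hmain
    have := congrArg (Units.val) hmain
    rw [Units.val_neg, Units.val_one] at this
    exact hne this
  · exact h

lemma phi_eq_quadChar (hp2 : p ≠ 2) (φ : MulChar (ZMod p) ℂ) (hφ : orderOf φ = 2) (u : ZMod p) :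
    φ u = ((quadraticChar (ZMod p) u : ℤ) : ℂ) := by
  have hplt : 2 < p := lt_of_le_of_ne (Fact.out : p.Prime).two_le (Ne.symm hp2)
  have hpodd : p % 2 = 1 := Nat.odd_iff.mp ((Fact.out : p.Prime).odd_of_ne_two hp2)
  obtain ⟨g, hgord, hg⟩ := exists_gen (p := p)
  have hg0 : (g : ZMod p) ≠ 0 := Units.ne_zero g
  -- the generator is not a square
  have hgsq : ¬ IsSquare ((g : ZMod p)) := by
    rintro ⟨c, hc⟩
    have hc0 : c ≠ 0 := by
      rintro rfl; rw [mul_zero] at hc; exact hg0 hc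
    have hcu : IsUnit c := isUnit_iff_ne_zero.mpr hc0
    have hgu : g = hcu.unit * hcu.unit := by
      ext; rw [Units.val_mul, hcu.unit_spec]; exact hc
    have hpow : g ^ ((p - 1) / 2) = 1 := by
      rw [hgu, ← sq, ← pow_mul]
      have h2 : 2 * ((p - 1) / 2) = p - 1 := by omega
      rw [h2]
      have h := pow_card_eq_one (x := hcu.unit)
      rwa [ZMod.card_units_eq_totient, Nat.totient_prime (Fact.out : p.Prime)] at h
    have hdvd : p - 1 ∣ (p - 1) / 2 := by
      have := orderOf_dvd_of_pow_eq_one hpow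
      rwa [hgord] at this
    have hle := Nat.le_of_dvd (by omega) hdvd
    omega
  have hqg : quadraticChar (ZMod p) (g : ZMod p) = -1 := by
    rcases quadraticChar_dichotomy hg0 with h | h
    · exact absurd (hgsq ((quadraticChar_one_iff_isSquare hg0).mp h)).elim id
    · exact h
  have hφg : φ (g : ZMod p) = -1 := by
    have hsq : φ (g : ZMod p) * φ (g : ZMod p) = 1 := by
      have h2 : (φ ^ 2) ((g : ZMod p)) = 1 := by
        have hφ2 : φ ^ 2 = 1 := by rw [← hφ]; exact pow_orderOf_eq_one φ
        rw [hφ2, MulChar.one_apply_coe]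
      rw [MulChar.pow_apply_coe] at h2
      rwa [← sq]
    rcases mul_self_eq_one_iff.mp hsq with h | h
    · exfalso
      have hone : φ = 1 := by
        refine MulChar.ext fun v => ?_
        obtain ⟨n, hn⟩ := hg v
        rw [MulChar.one_apply_coe, ← hn, Units.val_pow_eq_pow_val, map_pow, h, one_pow]
      rw [hone, orderOf_one] at hφ
      exact absurd hφ (by norm_num)
    · exact h
  rcases eq_or_ne u 0 with rfl | hu0
  · rw [MulChar.map_zero, quadraticChar_zero]
    norm_num
  · have huu : IsUnit u := isUnit_iff_ne_zero.mpr hu0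
    obtain ⟨n, hn⟩ := hg huu.unit
    have hun : u = (g : ZMod p) ^ n := by
      rw [← huu.unit_spec, ← hn, Units.val_pow_eq_pow_val]
    rw [hun, map_pow, map_pow, hφg, hqg]
    push_cast
    ring

lemma card_sqrts (hp2 : p ≠ 2) (φ : MulChar (ZMod p) ℂ) (hφ : orderOf φ = 2) (u : ZMod p) :
    ((univ.filter fun t : ZMod p => t ^ 2 = u).card : ℂ) = 1 + φ u := by
  have hchar : ringChar (ZMod p) ≠ 2 := by
    rw [ZMod.ringChar_zmod_n]; exact hp2
  have h := quadraticChar_card_sqrts hchar u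
  have hset : {x : ZMod p | x ^ 2 = u}.toFinset = univ.filter fun t : ZMod p => t ^ 2 = u := by
    ext t; simp
  rw [hset] at h
  rw [phi_eq_quadChar hp2 φ hφ]
  have h2 := congrArg (Int.cast : ℤ → ℂ) h
  push_cast at h2 ⊢
  rw [h2]; ring


lemma total_count {l : ℕ} (hl0 : l ≠ 0) (hld : l ∣ p - 1)
    (χ : MulChar (ZMod p) ℂ) (hχ : orderOf χ = l) (f : ZMod p → ZMod p) :
    ((univ.filter fun v : ZMod p × ZMod p => v.2 ^ l = f v.1).card : ℂ)
      = p + ∑ j ∈ Ico 1 l, ∑ x : ZMod p, (χ ^ j) (f x) := by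
  have h1 : ((univ.filter fun v : ZMod p × ZMod p => v.2 ^ l = f v.1).card : ℂ)
      = ∑ x : ZMod p, ((univ.filter fun y : ZMod p => y ^ l = f x).card : ℂ) := by
    rw [Finset.card_filter]
    push_cast
    rw [Fintype.sum_prod_type]
    refine Finset.sum_congr rfl fun x _ => ?_
    rw [Finset.card_filter]
    push_cast
    rfl
  rw [h1]
  have h2 : ∀ x : ZMod p, ((univ.filter fun y : ZMod p => y ^ l = f x).card : ℂ)
      = 1 + ∑ j ∈ Ico 1 l, (χ ^ j) (f x) := by
    intro x
    rw [count_pow_eq hl0 hld χ hχ (f x), Finset.range_eq_Ico,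
      Finset.sum_eq_sum_Ico_succ_bot (Nat.pos_of_ne_zero hl0), ← add_assoc]
    congr 1
    rcases eq_or_ne (f x) 0 with h | h
    · rw [if_pos h, h, pow_zero, MulChar.map_zero, add_zero]
    · rw [if_neg h, pow_zero, MulChar.one_apply (isUnit_iff_ne_zero.mpr h), zero_add]
  rw [Finset.sum_congr rfl fun x _ => h2 x, Finset.sum_add_distrib, Finset.sum_const,
    Finset.card_univ, ZMod.card, nsmul_eq_mul, mul_one, Finset.sum_comm]

end PointCountAux


open Finset PointCountAux in
/-- odd case of Theorem 1.8, formula (1.10): For `l ≥ 2`, `l ≠ 3`,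
an odd prime `p ≡ 1 (mod l)` with `(p−1)/l` odd, `χ` of order `l` and `φ` the
quadratic character, the number of points of `y^l = x(x−1)(x−1/2)` over `F_p` is
`N_l(1/2) = p + ∑_{i=1}^{⌊(l−1)/2⌋} χ^{2i}(−1) χ^{−2i}(8)
  (J(χ^i, χ^{2i}) + J(φχ^i, χ^{2i}))`. -/
theorem point_count_half_odd_case (p : ℕ) [Fact p.Prime] (hp2 : p ≠ 2)
    (l : ℕ) (hl : 2 ≤ l) (hl3 : l ≠ 3) (hpl : p % l = 1)
    (hodd : Odd ((p - 1) / l))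
    (χ φ : MulChar (ZMod p) ℂ) (hχ : orderOf χ = l) (hφ : orderOf φ = 2) :
    ((Finset.univ.filter
        (fun v : ZMod p × ZMod p =>
          v.2 ^ l = v.1 * (v.1 - 1) * (v.1 - (2 : ZMod p)⁻¹))).card : ℂ) =
      p + ∑ i ∈ Finset.Icc 1 ((l - 1) / 2),
        (χ ^ (2 * i)) (-1) * (χ ^ (2 * i))⁻¹ 8 *
          ((∑ t : ZMod p, (χ ^ i) t * (χ ^ (2 * i)) (1 - t)) +
            ∑ t : ZMod p, (φ * χ ^ i) t * (χ ^ (2 * i)) (1 - t)) := by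
  have hp : p.Prime := Fact.out
  have hplt : 2 < p := lt_of_le_of_ne hp.two_le (Ne.symm hp2)
  have hpodd : p % 2 = 1 := Nat.odd_iff.mp (hp.odd_of_ne_two hp2)
  have hl0 : l ≠ 0 := by omega
  have hld : l ∣ p - 1 := by
    have h := Nat.div_add_mod p l
    exact ⟨p / l, by omega⟩
  have hml : l * ((p - 1) / l) = p - 1 := Nat.mul_div_cancel' hld
  have hmodd : ((p - 1) / l) % 2 = 1 := Nat.odd_iff.mp hodd
  have hleven : l % 2 = 0 := by
    rcases Nat.even_or_odd l with he | ho
    · exact Nat.even_iff.mp he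
    · exfalso
      have h1 : Odd (l * ((p - 1) / l)) := ho.mul hodd
      rw [hml] at h1
      have := Nat.odd_iff.mp h1
      omega
  have h2ne : (2 : ZMod p) ≠ 0 := by
    have : ((2 : ℕ) : ZMod p) ≠ 0 := by
      rw [Ne, ZMod.natCast_eq_zero_iff]
      intro hdvd
      have := Nat.le_of_dvd (by norm_num) hdvd
      omega
    simpa using this
  set c : ZMod p := (2 : ZMod p)⁻¹ with hc
  have h2c : (2 : ZMod p) * c = 1 := mul_inv_cancel₀ h2ne
  have hc0 : c ≠ 0 := inv_ne_zero h2ne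
  have hchineg : χ (-1) = -1 := chi_neg_one hp2 hld hodd χ hχ
  -- the character sums
  have hSneg : ∀ j : ℕ, j ≠ 0 → Odd j →
      (∑ x : ZMod p, (χ ^ j) (x * (x - 1) * (x - c))) = 0 := by
    intro j hj hjodd
    set S := ∑ x : ZMod p, (χ ^ j) (x * (x - 1) * (x - c)) with hS
    have hfneg : ∀ x : ZMod p, (1 - x) * ((1 - x) - 1) * ((1 - x) - c)
        = (-1) * (x * (x - 1) * (x - c)) := by
      intro x
      linear_combination (x - x ^ 2) * h2c
    have hrefl : S = ∑ x : ZMod p, (χ ^ j) ((1 - x) * ((1 - x) - 1) * ((1 - x) - c)) := by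
      rw [hS, ← Equiv.sum_comp (Equiv.subLeft (1 : ZMod p))
        (fun x => (χ ^ j) (x * (x - 1) * (x - c)))]
      rfl
    have hneg : S = -S := by
      nth_rewrite 1 [hrefl]
      calc ∑ x : ZMod p, (χ ^ j) ((1 - x) * ((1 - x) - 1) * ((1 - x) - c))
          = ∑ x : ZMod p, -((χ ^ j) (x * (x - 1) * (x - c))) := by
            refine Finset.sum_congr rfl fun x _ => ?_
            rw [hfneg x, map_mul, MulChar.pow_apply' χ hj, hchineg,
              Odd.neg_one_pow hjodd, neg_one_mul]
        _ = -S := by rw [hS, Finset.sum_neg_distrib]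
    exact add_self_eq_zero.mp (by linear_combination hneg)
  -- key evaluation for even exponents
  have hkey : ∀ i : ℕ, i ≠ 0 →
      (∑ x : ZMod p, (χ ^ (2 * i)) (x * (x - 1) * (x - c)))
        = (χ ^ (2 * i)) (-1) * (χ ^ (2 * i))⁻¹ 8 *
            ((∑ t : ZMod p, (χ ^ i) t * (χ ^ (2 * i)) (1 - t)) +
              ∑ t : ZMod p, (φ * χ ^ i) t * (χ ^ (2 * i)) (1 - t)) := by
    intro i hi0
    have h2i0 : 2 * i ≠ 0 := by omega
    set ψ := χ ^ (2 * i) with hψ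
    -- shift x = t + c
    have hshift : (∑ x : ZMod p, ψ (x * (x - 1) * (x - c)))
        = ∑ t : ZMod p, ψ (t * (t ^ 2 - c ^ 2)) := by
      rw [← Equiv.sum_comp (Equiv.addRight c)
        (fun x => ψ (x * (x - 1) * (x - c)))]
      refine Finset.sum_congr rfl fun t _ => ?_
      have : (t + c) * ((t + c) - 1) * ((t + c) - c) = t * (t ^ 2 - c ^ 2) := by
        linear_combination (t ^ 2 + t * c) * h2c
      simp only [Equiv.coe_addRight]
      rw [this]
    -- split the character
    have hsplit : ∀ t : ZMod p, ψ (t * (t ^ 2 - c ^ 2))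
        = (χ ^ i) (t ^ 2) * ψ (t ^ 2 - c ^ 2) := by
      intro t
      rw [map_mul]
      congr 1
      rcases eq_or_ne t 0 with rfl | ht
      · rw [MulChar.map_zero, zero_pow two_ne_zero, MulChar.map_zero]
      · rw [MulChar.pow_apply' χ h2i0, MulChar.pow_apply' χ hi0, map_pow, ← pow_mul]
    -- fiberwise sum over u = t^2
    have hfib : (∑ t : ZMod p, (χ ^ i) (t ^ 2) * ψ (t ^ 2 - c ^ 2))
        = ∑ u : ZMod p, (1 + φ u) * ((χ ^ i) u * ψ (u - c ^ 2)) := by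
      rw [← Finset.sum_fiberwise_of_maps_to' (t := (univ : Finset (ZMod p)))
        (fun t _ => mem_univ (t ^ 2)) (fun u => (χ ^ i) u * ψ (u - c ^ 2))]
      refine Finset.sum_congr rfl fun u _ => ?_
      rw [Finset.sum_const, nsmul_eq_mul, ← card_sqrts hp2 φ hφ u]
    -- the two Jacobi-type sums
    have hT : ∀ A : MulChar (ZMod p) ℂ,
        (∑ u : ZMod p, A u * ψ (u - c ^ 2))
          = A (c ^ 2) * ψ (c ^ 2) * ψ (-1) * ∑ t : ZMod p, A t * ψ (1 - t) := by
      intro A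
      have hd0 : c ^ 2 ≠ 0 := pow_ne_zero _ hc0
      rw [← Equiv.sum_comp (Equiv.mulRight₀ (c ^ 2) hd0)
        (fun u => A u * ψ (u - c ^ 2)), Finset.mul_sum]
      refine Finset.sum_congr rfl fun t _ => ?_
      simp only [Equiv.mulRight₀_apply]
      have h1 : t * c ^ 2 - c ^ 2 = ((-1) * (1 - t)) * c ^ 2 := by ring
      rw [h1, map_mul A, map_mul ψ, map_mul ψ]
      ring
    -- coefficient computation
    have hψ8 : (ψ)⁻¹ 8 = ψ (c ^ 3) := by
      rw [MulChar.inv_apply' ψ 8]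
      congr 1
      rw [hc, inv_pow]
      norm_num
    have hcoef : ∀ A : MulChar (ZMod p) ℂ, A (c ^ 2) = (χ ^ i) (c ^ 2) →
        A (c ^ 2) * ψ (c ^ 2) = (ψ)⁻¹ 8 := by
      intro A hA
      rw [hA, hψ8, hψ, map_pow, map_pow, map_pow, MulChar.pow_apply' χ hi0,
        MulChar.pow_apply' χ h2i0]
      rw [← pow_mul, ← pow_mul, ← pow_mul, ← pow_add]
      congr 1
      ring
    have hcoef1 : (χ ^ i) (c ^ 2) * ψ (c ^ 2) = (ψ)⁻¹ 8 := hcoef _ rfl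
    have hcoef2 : (φ * χ ^ i) (c ^ 2) * ψ (c ^ 2) = (ψ)⁻¹ 8 := by
      refine hcoef _ ?_
      rw [MulChar.mul_apply]
      have hφc : φ (c ^ 2) = 1 := by
        have hφ2 : φ ^ 2 = 1 := by rw [← hφ]; exact pow_orderOf_eq_one φ
        rw [map_pow, ← MulChar.pow_apply' φ (by norm_num : (2:ℕ) ≠ 0) c, hφ2,
          MulChar.one_apply (isUnit_iff_ne_zero.mpr hc0)]
      rw [hφc, one_mul]
    -- assemble
    calc (∑ x : ZMod p, ψ (x * (x - 1) * (x - c)))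
        = ∑ t : ZMod p, (χ ^ i) (t ^ 2) * ψ (t ^ 2 - c ^ 2) := by
          rw [hshift]; exact Finset.sum_congr rfl fun t _ => hsplit t
      _ = ∑ u : ZMod p, (1 + φ u) * ((χ ^ i) u * ψ (u - c ^ 2)) := hfib
      _ = (∑ u : ZMod p, (χ ^ i) u * ψ (u - c ^ 2))
            + ∑ u : ZMod p, (φ * χ ^ i) u * ψ (u - c ^ 2) := by
          rw [← Finset.sum_add_distrib]
          refine Finset.sum_congr rfl fun u _ => ?_
          rw [MulChar.mul_apply]
          ring
      _ = ψ (-1) * (ψ)⁻¹ 8 *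
            ((∑ t : ZMod p, (χ ^ i) t * ψ (1 - t))
              + ∑ t : ZMod p, (φ * χ ^ i) t * ψ (1 - t)) := by
          rw [hT (χ ^ i), hT (φ * χ ^ i), hcoef1, hcoef2]
          ring
  -- put everything together
  rw [total_count hl0 hld χ hχ (fun x => x * (x - 1) * (x - c))]
  congr 1
  -- drop odd terms and reindex
  rw [← Finset.sum_filter_add_sum_filter_not (Ico 1 l) (fun j => j % 2 = 0)]
  have hoddzero : (∑ j ∈ (Ico 1 l).filter (fun j => ¬ j % 2 = 0),
      ∑ x : ZMod p, (χ ^ j) (x * (x - 1) * (x - c))) = 0 := by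
    refine Finset.sum_eq_zero fun j hj => ?_
    simp only [Finset.mem_filter, Finset.mem_Ico] at hj
    exact hSneg j (by omega) (Nat.odd_iff.mpr (by omega))
  rw [hoddzero, add_zero]
  refine (Finset.sum_nbij' (fun i => 2 * i) (fun j => j / 2) ?_ ?_ ?_ ?_ ?_).symm
  · intro i hi
    simp only [Finset.mem_Icc] at hi
    simp only [Finset.mem_filter, Finset.mem_Ico]
    omega
  · intro j hj
    simp only [Finset.mem_filter, Finset.mem_Ico] at hj
    simp only [Finset.mem_Icc]
    omega
  · intro i hi
    simp only [Finset.mem_Icc] at hi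
    show 2 * i / 2 = i
    omega
  · intro j hj
    simp only [Finset.mem_filter, Finset.mem_Ico] at hj
    show 2 * (j / 2) = j
    omega
  · intro i hi
    simp only [Finset.mem_Icc] at hi
    exact (hkey i (by omega)).symm
end

section
/- Let l ≥ 2 be an integer with l ≠ 3, let p be an odd prime with p ≡ 1 (mod l) such that (p−1)/l is even, let χ be a multiplicative character of F_p of order l with values in ℂ, let φ be the quadratic character of F_p, and for each 1 ≤ i ≤ l−1 let ψ_i be a multiplicative character of F_p with ψ_i² = χ^i. Then N_l(1/2) = p + ∑_{i=1}^{l−1} χ^{i}(−1) · χ^{−i}(8) · ( J(ψ_i, χ^i) + J(φψ_i, χ^i) ), where 1/2 denotes the inverse of 2 in F_p. (This is the even case of the paper's Theorem 1.8, formula (1.10), stated there as −a_p(C_{l,1/2}) = p·∑_{i=1}^{l−1} χ^{−i}(8) [ (√χ^i choose χ^{−i}) + (φ√χ^i choose χ^{−i}) ], translated via (A choose B) = B(−1)/p · J(A, B̄) and a_p = p − N_l(1/2); the value is independent of the choice of square roots ψ_i.) -/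
open Finset Polynomial

section aux

variable (p : ℕ) [Fact p.Prime]

lemma count_pow_eq_one_aux (l : ℕ) (hl : 0 < l) (hdvd : l ∣ p - 1) :
    (Finset.univ.filter (fun z : ZMod p => z ^ l = 1)).card = l := by
  obtain ⟨g, hg⟩ := IsCyclic.exists_generator (α := (ZMod p)ˣ)
  have horder : orderOf g = p - 1 := by
    rw [orderOf_eq_card_of_forall_mem_zpowers hg, Nat.card_eq_fintype_card, ZMod.card_units p]
  have hne : orderOf g ≠ 0 := by
    rw [horder]
    have := (Fact.out : p.Prime).one_lt
    omega
  have hdvd' : l ∣ orderOf g := horder ▸ hdvd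
  have hord : orderOf ((g ^ (orderOf g / l) : (ZMod p)ˣ) : ZMod p) = l := by
    rw [orderOf_units, orderOf_pow_orderOf_div hne hdvd']
  have hprim := IsPrimitiveRoot.orderOf ((g ^ (orderOf g / l) : (ZMod p)ˣ) : ZMod p)
  rw [hord] at hprim
  have : Finset.univ.filter (fun z : ZMod p => z ^ l = 1) = nthRootsFinset l (1 : ZMod p) := by
    ext z
    simp [Polynomial.mem_nthRootsFinset hl]
  rw [this, hprim.card_nthRootsFinset]

lemma count_pow_eq (l : ℕ) (hl : 0 < l) (hdvd : l ∣ p - 1)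
    (χ : MulChar (ZMod p) ℂ) (hχ : orderOf χ = l) {a : ZMod p} (ha : a ≠ 0) :
    ((Finset.univ.filter (fun y : ZMod p => y ^ l = a)).card : ℂ)
      = ∑ j ∈ Finset.range l, (χ ^ j) a := by
  obtain ⟨g, hg⟩ := IsCyclic.exists_monoid_generator (α := (ZMod p)ˣ)
  have horder : orderOf g = p - 1 := by
    rw [orderOf_eq_card_of_forall_mem_zpowers fun x => mem_powers_iff_mem_zpowers.mp (hg x),
      Nat.card_eq_fintype_card, ZMod.card_units p]
  have hdvd' : l ∣ orderOf g := horder ▸ hdvd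
  have hkey : ∀ m : ℕ, (χ (g : ZMod p)) ^ m = 1 ↔ χ ^ m = 1 := by
    intro m
    constructor
    · intro h
      apply MulChar.ext
      intro b
      obtain ⟨k, hk⟩ := hg b
      have hk' : g ^ k = b := hk
      rw [MulChar.one_apply_coe, MulChar.pow_apply_coe, ← hk', Units.val_pow_eq_pow_val,
        map_pow, ← pow_mul, mul_comm, pow_mul, h, one_pow]
    · intro h
      rw [← MulChar.pow_apply_coe, h, MulChar.one_apply_coe]
  have hgl : (χ (g : ZMod p)) ^ l = 1 := (hkey l).mpr (by rw [← hχ]; exact pow_orderOf_eq_one χ)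
  have hζ : orderOf (χ (g : ZMod p)) = l := by
    apply Nat.dvd_antisymm
    · exact orderOf_dvd_of_pow_eq_one ((hkey l).mpr (hχ ▸ pow_orderOf_eq_one χ))
    · rw [← hχ]
      exact orderOf_dvd_of_pow_eq_one ((hkey _).mp (pow_orderOf_eq_one _))
  have hau : IsUnit a := isUnit_iff_ne_zero.mpr ha
  obtain ⟨k, hk⟩ := hg hau.unit
  have hk' : g ^ k = hau.unit := hk
  have hka : ((g ^ k : (ZMod p)ˣ) : ZMod p) = a := by rw [hk', IsUnit.unit_spec]
  have hχa : χ a = (χ (g : ZMod p)) ^ k := by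
    rw [← hka, Units.val_pow_eq_pow_val, map_pow]
  have hsum : ∑ j ∈ Finset.range l, (χ ^ j) a = ∑ j ∈ Finset.range l, (χ a) ^ j := by
    refine Finset.sum_congr rfl fun j _ => ?_
    rw [← hka, MulChar.pow_apply_coe]
  rw [hsum]
  by_cases hlk : l ∣ k
  · obtain ⟨m, hm⟩ := hlk
    have hχa1 : χ a = 1 := by
      rw [hχa, hm, pow_mul, hgl, one_pow]
    have hrhs : ∑ j ∈ Finset.range l, (χ a) ^ j = l := by simp [hχa1]
    rw [hrhs]
    set u : ZMod p := ((g ^ m : (ZMod p)ˣ) : ZMod p) with hu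
    have hul : u ^ l = a := by
      rw [hu, ← Units.val_pow_eq_pow_val, ← pow_mul, mul_comm m l, ← hm, hka]
    have hune : u ≠ 0 := Units.ne_zero _
    have himg : Finset.univ.filter (fun y : ZMod p => y ^ l = a)
        = (Finset.univ.filter (fun z : ZMod p => z ^ l = 1)).image (fun z => z * u) := by
      ext y
      simp only [Finset.mem_filter, Finset.mem_univ, true_and, Finset.mem_image]
      constructor
      · intro hy
        refine ⟨y * u⁻¹, ?_, by field_simp⟩
        rw [mul_pow, hy, inv_pow, ← hul]
        field_simp
      · rintro ⟨z, hz, rfl⟩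
        rw [mul_pow, hz, one_mul, hul]
    rw [himg, Finset.card_image_of_injective _ (mul_left_injective₀ hune),
      count_pow_eq_one_aux p l hl hdvd]
  · have hχane : χ a ≠ 1 := by
      intro h
      apply hlk
      rw [hχa] at h
      exact hζ ▸ orderOf_dvd_of_pow_eq_one h
    have hrhs : ∑ j ∈ Finset.range l, (χ a) ^ j = 0 := by
      rw [geom_sum_eq hχane]
      have : (χ a) ^ l = 1 := by
        rw [hχa, ← pow_mul, mul_comm, pow_mul, hgl, one_pow]
      rw [this, sub_self, zero_div]
    rw [hrhs]
    have hempty : Finset.univ.filter (fun y : ZMod p => y ^ l = a) = ∅ := by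
      rw [Finset.filter_eq_empty_iff]
      intro y _ hyl
      have hy : y ≠ 0 := by
        intro h
        rw [h, zero_pow hl.ne'] at hyl
        exact ha hyl.symm
      have hyu : IsUnit y := isUnit_iff_ne_zero.mpr hy
      obtain ⟨n, hn⟩ := hg hyu.unit
      have hn' : g ^ n = hyu.unit := hn
      have hgnl : g ^ (n * l) = g ^ k := by
        apply Units.ext
        rw [Units.val_pow_eq_pow_val, Units.val_pow_eq_pow_val, pow_mul,
          ← Units.val_pow_eq_pow_val, hn', IsUnit.unit_spec, hyl, ← hka,
          Units.val_pow_eq_pow_val]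
      have hmod : n * l ≡ k [MOD orderOf g] := pow_eq_pow_iff_modEq.mp hgnl
      have hmodl : n * l ≡ k [MOD l] := hmod.of_dvd hdvd'
      apply hlk
      have h0 : (0 : ℕ) ≡ k [MOD l] :=
        (Nat.modEq_zero_iff_dvd.mpr ⟨n, mul_comm n l⟩).symm.trans hmodl
      exact Nat.modEq_zero_iff_dvd.mp h0.symm
    rw [hempty]
    simp

end aux

lemma count_sq (p : ℕ) [Fact p.Prime] (hp2 : p ≠ 2)
    (φ : MulChar (ZMod p) ℂ) (hφ : orderOf φ = 2) (t : ZMod p) :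
    ((Finset.univ.filter (fun u : ZMod p => u ^ 2 = t)).card : ℂ) = 1 + φ t := by
  have hp : p.Prime := Fact.out
  by_cases ht : t = 0
  · subst ht
    have : Finset.univ.filter (fun u : ZMod p => u ^ 2 = 0) = {0} := by
      ext u; simp [pow_eq_zero_iff]
    rw [this, MulChar.map_nonunit φ not_isUnit_zero]
    simp
  · have h2dvd : 2 ∣ p - 1 := by
      obtain ⟨m, hm⟩ := hp.odd_of_ne_two hp2
      omega
    rw [count_pow_eq p 2 two_pos h2dvd φ hφ ht]
    rw [Finset.sum_range_succ, Finset.sum_range_one, pow_zero, pow_one,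
      MulChar.one_apply (isUnit_iff_ne_zero.mpr ht)]

/-- even case of Theorem 1.8, formula (1.10): For `l ≥ 2`, `l ≠ 3`,
an odd prime `p ≡ 1 (mod l)` with `(p−1)/l` even, `χ` of order `l`, `φ` the
quadratic character, and square roots `ψ_i` of `χ^i` for `1 ≤ i ≤ l−1`,
`N_l(1/2) = p + ∑_{i=1}^{l−1} χ^i(−1) χ^{−i}(8) (J(ψ_i, χ^i) + J(φψ_i, χ^i))`. -/
theorem point_count_half_even_case (p : ℕ) [Fact p.Prime] (hp2 : p ≠ 2)
    (l : ℕ) (hl : 2 ≤ l) (hl3 : l ≠ 3) (hpl : p % l = 1)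
    (heven : Even ((p - 1) / l))
    (χ φ : MulChar (ZMod p) ℂ) (hχ : orderOf χ = l) (hφ : orderOf φ = 2)
    (ψ : ℕ → MulChar (ZMod p) ℂ)
    (hψ : ∀ i ∈ Finset.Icc 1 (l - 1), (ψ i) ^ 2 = χ ^ i) :
    ((Finset.univ.filter
        (fun v : ZMod p × ZMod p =>
          v.2 ^ l = v.1 * (v.1 - 1) * (v.1 - (2 : ZMod p)⁻¹))).card : ℂ) =
      p + ∑ i ∈ Finset.Icc 1 (l - 1),
        (χ ^ i) (-1) * (χ ^ i)⁻¹ 8 *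
          ((∑ t : ZMod p, (ψ i) t * (χ ^ i) (1 - t)) +
            ∑ t : ZMod p, (φ * ψ i) t * (χ ^ i) (1 - t)) := by
  have hp : p.Prime := Fact.out
  have hp1 : 1 < p := hp.one_lt
  have hl0 : 0 < l := by omega
  have hdvd : l ∣ p - 1 := by
    refine ⟨p / l, ?_⟩
    have h := Nat.div_add_mod p l
    omega
  have h2 : (2 : ZMod p) ≠ 0 := by
    have h : ((2 : ℕ) : ZMod p) ≠ 0 := by
      rw [Ne, ZMod.natCast_eq_zero_iff]
      intro h
      exact hp2 ((Nat.prime_dvd_prime_iff_eq hp Nat.prime_two).mp h)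
    simpa using h
  have h8 : (8 : ZMod p) ≠ 0 := by
    have h83 : (8 : ZMod p) = 2 ^ 3 := by norm_num
    rw [h83]
    exact pow_ne_zero _ h2
  set f : ZMod p → ZMod p := fun x => x * (x - 1) * (x - (2 : ZMod p)⁻¹) with hf
  -- Step A: split the point count into fibers over x
  have hA : (Finset.univ.filter
        (fun v : ZMod p × ZMod p => v.2 ^ l = v.1 * (v.1 - 1) * (v.1 - (2 : ZMod p)⁻¹))).card
      = ∑ x : ZMod p, (Finset.univ.filter (fun y : ZMod p => y ^ l = f x)).card := by
    rw [Finset.card_filter, ← Finset.univ_product_univ, Finset.sum_product]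
    exact Finset.sum_congr rfl fun x _ => (Finset.card_filter _ _).symm
  -- Step B: each fiber count via characters
  have hB : ∀ x : ZMod p, ((Finset.univ.filter (fun y : ZMod p => y ^ l = f x)).card : ℂ)
      = 1 + ∑ i ∈ Finset.Icc 1 (l - 1), (χ ^ i) (f x) := by
    intro x
    by_cases hfx : f x = 0
    · have hone : Finset.univ.filter (fun y : ZMod p => y ^ l = f x) = {0} := by
        ext y
        simp [hfx, pow_eq_zero_iff hl0.ne']
      rw [hone]
      have hz : ∀ i ∈ Finset.Icc 1 (l - 1), (χ ^ i) (f x) = 0 := fun i _ => by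
        rw [hfx]; exact MulChar.map_nonunit _ not_isUnit_zero
      rw [Finset.sum_congr rfl hz]
      simp
    · rw [count_pow_eq p l hl0 hdvd χ hχ hfx]
      have h0 : (0 : ℕ) ∈ Finset.range l := by simp [hl0]
      rw [← Finset.add_sum_erase _ _ h0]
      have herase : (Finset.range l).erase 0 = Finset.Icc 1 (l - 1) := by
        ext j
        simp only [Finset.mem_erase, Finset.mem_range, Finset.mem_Icc]
        omega
      rw [herase, pow_zero, MulChar.one_apply (isUnit_iff_ne_zero.mpr hfx)]
  -- Step C: evaluate each character sum
  have hC : ∀ i ∈ Finset.Icc 1 (l - 1), ∑ x : ZMod p, (χ ^ i) (f x)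
      = (χ ^ i) (-1) * (χ ^ i)⁻¹ 8 *
          ((∑ t : ZMod p, (ψ i) t * (χ ^ i) (1 - t)) +
            ∑ t : ZMod p, (φ * ψ i) t * (χ ^ i) (1 - t)) := by
    intro i hi
    have hψi : (ψ i) ^ 2 = χ ^ i := hψ i hi
    set A : MulChar (ZMod p) ℂ := χ ^ i with hAdef
    let e : ZMod p ≃ ZMod p :=
      { toFun := fun u => (u + 1) * (2 : ZMod p)⁻¹
        invFun := fun x => 2 * x - 1
        left_inv := fun u => by field_simp; ring
        right_inv := fun x => by field_simp; ring }
    have hsum1 : ∑ x : ZMod p, A (f x) = ∑ u : ZMod p, A (f (e u)) :=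
      (Equiv.sum_comp e (fun x => A (f x))).symm
    have hterm : ∀ u : ZMod p, A (f (e u))
        = A (-1) * A (8 : ZMod p)⁻¹ * ((ψ i) (u ^ 2) * A (1 - u ^ 2)) := by
      intro u
      have hfe : f (e u) = (-1) * (u * (1 - u ^ 2)) * (8 : ZMod p)⁻¹ := by
        show ((u + 1) * (2:ZMod p)⁻¹) * (((u + 1) * (2:ZMod p)⁻¹) - 1) *
            (((u + 1) * (2:ZMod p)⁻¹) - (2:ZMod p)⁻¹) = _
        have h82 : (8 : ZMod p) = 2 ^ 3 := by norm_num
        field_simp [h82]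
        ring
      have hAu : (ψ i) (u ^ 2) = A u := by
        rw [map_pow, ← MulChar.pow_apply' (ψ i) two_ne_zero, hψi]
      rw [hfe, map_mul, map_mul, map_mul, hAu]
      ring
    rw [hsum1, Finset.sum_congr rfl fun u _ => hterm u, ← Finset.mul_sum]
    have hfib : ∑ u : ZMod p, (ψ i) (u ^ 2) * A (1 - u ^ 2)
        = ∑ t : ZMod p,
            ((Finset.univ.filter (fun u : ZMod p => u ^ 2 = t)).card : ℂ) *
              ((ψ i) t * A (1 - t)) := by
      rw [← Finset.sum_fiberwise' Finset.univ (fun u => u ^ 2)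
        (fun t => (ψ i) t * A (1 - t))]
      exact Finset.sum_congr rfl fun t _ => by rw [Finset.sum_const, nsmul_eq_mul]
    rw [hfib]
    have hsplit : ∑ t : ZMod p,
        ((Finset.univ.filter (fun u : ZMod p => u ^ 2 = t)).card : ℂ) * ((ψ i) t * A (1 - t))
        = (∑ t : ZMod p, (ψ i) t * A (1 - t)) + ∑ t : ZMod p, (φ * ψ i) t * A (1 - t) := by
      rw [← Finset.sum_add_distrib]
      refine Finset.sum_congr rfl fun t _ => ?_
      rw [count_sq p hp2 φ hφ t, MulChar.coeToFun_mul, Pi.mul_apply]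
      ring
    rw [hsplit, MulChar.inv_apply' A 8]
  -- Assemble
  rw [hA]
  push_cast
  rw [Finset.sum_congr rfl fun x _ => hB x, Finset.sum_add_distrib, Finset.sum_const,
    Finset.card_univ, ZMod.card, Finset.sum_comm, nsmul_eq_mul, mul_one]
  congr 1
  exact Finset.sum_congr rfl hC
end

section
/- Let p be a prime with p ≡ 1 (mod 4), let χ₄ be a multiplicative character of F_p of order 4 with values in ℂ, and let φ be the quadratic character of F_p. Then N_2(1/2) − p = 2·φ(2)·Re( J(χ₄, φ) ), where 1/2 denotes the inverse of 2 in F_p. (This is the second part of the paper's Theorem 1.11 (Rouse), stated there as −φ(−2)/(2p) · a_p(C_{2,1/2}) = Re(χ₄ choose φ); it is translated using (χ₄ choose φ) = φ(−1)/p · J(χ₄, φ), φ(−1) = 1 for p ≡ 1 (mod 4), and a_p = p − N_2(1/2).) -/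
open Finset MulChar

private lemma genval_ext {p : ℕ} [Fact p.Prime] {g : (ZMod p)ˣ}
    (hg : ∀ x : (ZMod p)ˣ, x ∈ Subgroup.zpowers g)
    (ψ₁ ψ₂ : MulChar (ZMod p) ℂ) (hgeq : ψ₁ ↑g = ψ₂ ↑g) : ψ₁ = ψ₂ := by
  have hv : ∀ (ψ : MulChar (ZMod p) ℂ) (k : ℤ), ψ ↑(g ^ k) = (ψ ↑g) ^ k := by
    intro ψ k
    calc ψ ↑(g ^ k) = ↑(equivToUnitHom ψ (g ^ k)) := (coe_equivToUnitHom _ _).symm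
      _ = ↑((equivToUnitHom ψ g) ^ k) := by rw [map_zpow]
      _ = (↑(equivToUnitHom ψ g) : ℂ) ^ k := Units.val_zpow_eq_zpow_val _ _
      _ = (ψ ↑g) ^ k := by rw [coe_equivToUnitHom]
  apply MulChar.ext
  intro a
  obtain ⟨k, hk⟩ := Subgroup.mem_zpowers_iff.mp (hg a)
  rw [← hk, hv, hv, hgeq]

private lemma char_orderOf_two_eq {p : ℕ} [hp : Fact p.Prime] (hp2 : p % 2 = 1)
    (χ : MulChar (ZMod p) ℂ) (h : orderOf χ = 2) :
    χ = (quadraticChar (ZMod p)).ringHomComp (Int.castRingHom ℂ) := by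
  obtain ⟨g, hg⟩ := IsCyclic.exists_generator (α := (ZMod p)ˣ)
  have hple : 2 ≤ p := hp.out.two_le
  have hg0 : (g : ZMod p) ≠ 0 := g.ne_zero
  have hgns : ¬ IsSquare (g : ZMod p) := by
    rintro ⟨b, hb⟩
    have hb0 : b ≠ 0 := by
      rintro rfl; exact hg0 (by simpa using hb)
    have hgu : g = Units.mk0 b hb0 * Units.mk0 b hb0 := Units.ext (by simpa using hb)
    have hcard : Fintype.card (ZMod p)ˣ = p - 1 := ZMod.card_units p
    have hord : orderOf g = p - 1 := by
      rw [orderOf_eq_card_of_forall_mem_zpowers hg, Nat.card_eq_fintype_card, hcard]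
    have hpow : g ^ ((p - 1) / 2) = 1 := by
      rw [hgu, ← pow_two, ← pow_mul]
      have h2 : 2 * ((p - 1) / 2) = p - 1 := by omega
      rw [h2, ← hcard]
      exact pow_card_eq_one
    have hdvd := orderOf_dvd_of_pow_eq_one hpow
    rw [hord] at hdvd
    have := Nat.le_of_dvd (by omega) hdvd
    omega
  have hqcg : quadraticChar (ZMod p) ↑g = -1 := by
    rcases quadraticChar_dichotomy hg0 with h1 | h1
    · exact absurd ((quadraticChar_one_iff_isSquare hg0).mp h1) hgns
    · exact h1
  have hχ2 : χ ^ 2 = 1 := h ▸ pow_orderOf_eq_one χ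
  have hχ1 : χ ≠ 1 := by
    intro e; rw [e, orderOf_one] at h; omega
  have hχgsq : χ ↑g * χ ↑g = 1 := by
    have h2 := congrArg (fun ψ : MulChar (ZMod p) ℂ => ψ (g : ZMod p)) hχ2
    rw [pow_apply' χ two_ne_zero, one_apply_coe] at h2
    rw [← pow_two]; exact h2
  have hχg : χ ↑g = -1 := by
    rcases mul_self_eq_one_iff.mp hχgsq with h1 | h1
    · exact absurd (genval_ext hg χ 1 (by rw [h1, one_apply_coe])) hχ1
    · exact h1
  apply genval_ext hg
  rw [hχg, ringHomComp_apply, hqcg]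
  norm_num

/-- second part of Theorem 1.11, Rouse: For a prime
`p ≡ 1 (mod 4)`, `χ₄` of order `4` and `φ` the quadratic character,
`N_2(1/2) − p = 2 φ(2) Re(J(χ₄, φ))`. -/
theorem rouse_trace_formula (p : ℕ) [Fact p.Prime] (hp4 : p % 4 = 1)
    (χ₄ φ : MulChar (ZMod p) ℂ) (hχ₄ : orderOf χ₄ = 4) (hφ : orderOf φ = 2) :
    ((Finset.univ.filter
        (fun v : ZMod p × ZMod p =>
          v.2 ^ 2 = v.1 * (v.1 - 1) * (v.1 - (2 : ZMod p)⁻¹))).card : ℂ) - p =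
      2 * φ 2 * (((∑ t : ZMod p, χ₄ t * φ (1 - t)).re : ℝ) : ℂ) := by
  have hp2 : p % 2 = 1 := by omega
  have hple : 2 ≤ p := (Fact.out : p.Prime).two_le
  have hring : ringChar (ZMod p) ≠ 2 := by
    rw [ZMod.ringChar_zmod_n]; omega
  have h2 : (2 : ZMod p) ≠ 0 := by
    intro h
    have h' : ((2 : ℕ) : ZMod p) = 0 := by exact_mod_cast h
    have := (ZMod.natCast_eq_zero_iff 2 p).mp h'
    have := Nat.le_of_dvd (by norm_num) this
    omega
  have h8 : (8 : ZMod p) ≠ 0 := by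
    have h83 : (8 : ZMod p) = 2 ^ 3 := by norm_num
    rw [h83]; exact pow_ne_zero _ h2
  have hφq : φ = (quadraticChar (ZMod p)).ringHomComp (Int.castRingHom ℂ) :=
    char_orderOf_two_eq hp2 φ hφ
  have hχsq : χ₄ ^ 2 = φ := by
    rw [hφq]
    apply char_orderOf_two_eq hp2
    rw [orderOf_pow' χ₄ two_ne_zero, hχ₄]
    norm_num
  have hχ₄4 : χ₄ ^ 4 = 1 := hχ₄ ▸ pow_orderOf_eq_one χ₄
  have hφval : ∀ s : ZMod p, φ s = ((quadraticChar (ZMod p) s : ℤ) : ℂ) := by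
    intro s; rw [hφq, ringHomComp_apply]; simp
  have hconjφ : ∀ s : ZMod p, (starRingEnd ℂ) (φ s) = φ s := by
    intro s; rw [hφval]; simp
  have hφunit_sq : ∀ s : ZMod p, s ≠ 0 → φ s * φ s = 1 := by
    intro s hs
    have h1 : φ ^ 2 = 1 := hφ ▸ pow_orderOf_eq_one φ
    have h3 := congrArg (fun ψ : MulChar (ZMod p) ℂ => ψ s) h1
    rw [pow_apply' φ two_ne_zero, one_apply (isUnit_iff_ne_zero.mpr hs)] at h3
    rw [← pow_two]; exact h3
  have hφneg1 : φ (-1 : ZMod p) = 1 := by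
    rw [hφval]
    have : quadraticChar (ZMod p) (-1) = 1 :=
      (quadraticChar_one_iff_isSquare (neg_ne_zero.mpr one_ne_zero)).mpr
        ((ZMod.exists_sq_eq_neg_one_iff).mpr (by omega))
    rw [this]; norm_num
  have hφflip : ∀ t : ZMod p, φ (t - 1) = φ (1 - t) := by
    intro t
    have h' : t - 1 = -1 * (1 - t) := by ring
    rw [h', map_mul, hφneg1, one_mul]
  -- counting square roots
  have hcount : ∀ a : ZMod p,
      ((univ.filter (fun y : ZMod p => y ^ 2 = a)).card : ℂ) = 1 + φ a := by
    intro a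
    have hq := quadraticChar_card_sqrts hring a
    rw [Set.toFinset_setOf] at hq
    have hc : ((univ.filter (fun y : ZMod p => y ^ 2 = a)).card : ℂ)
        = ((quadraticChar (ZMod p) a : ℤ) : ℂ) + 1 := by exact_mod_cast hq
    rw [hc, hφval]; ring
  set f : ZMod p → ZMod p := fun x => x * (x - 1) * (x - (2 : ZMod p)⁻¹) with hf
  set J : ℂ := ∑ t : ZMod p, χ₄ t * φ (1 - t) with hJ
  -- Step 1 : card = p + S
  have key1 : ((Finset.univ.filter
        (fun v : ZMod p × ZMod p =>
          v.2 ^ 2 = v.1 * (v.1 - 1) * (v.1 - (2 : ZMod p)⁻¹))).card : ℂ)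
      = p + ∑ x : ZMod p, φ (f x) := by
    rw [Finset.card_filter]
    push_cast
    rw [Fintype.sum_prod_type]
    have hinner : ∀ x : ZMod p,
        (∑ y : ZMod p, if y ^ 2 = f x then (1 : ℂ) else 0) = 1 + φ (f x) := by
      intro x
      rw [Finset.sum_boole]
      exact hcount (f x)
    calc (∑ x : ZMod p, ∑ y : ZMod p, if y ^ 2 = f x then (1 : ℂ) else 0)
        = ∑ x : ZMod p, (1 + φ (f x)) := Finset.sum_congr rfl fun x _ => hinner x
      _ = p + ∑ x : ZMod p, φ (f x) := by
          rw [Finset.sum_add_distrib, Finset.sum_const, Finset.card_univ, ZMod.card]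
          simp [nsmul_eq_mul]
  -- Step 2 : substitution x = (u+1)/2
  have key2 : ∑ x : ZMod p, φ (f x)
      = φ ((8 : ZMod p)⁻¹) * ∑ u : ZMod p, φ (u * (u ^ 2 - 1)) := by
    let e : ZMod p ≃ ZMod p :=
      (Equiv.addRight (1 : ZMod p)).trans (Equiv.mulRight₀ (2⁻¹ : ZMod p) (inv_ne_zero h2))
    have he : ∀ u : ZMod p, f (e u) = u * (u ^ 2 - 1) * (8 : ZMod p)⁻¹ := by
      intro u
      show (u + 1) * 2⁻¹ * ((u + 1) * 2⁻¹ - 1) * ((u + 1) * 2⁻¹ - (2 : ZMod p)⁻¹)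
          = u * (u ^ 2 - 1) * (8 : ZMod p)⁻¹
      field_simp
      ring
    rw [← Equiv.sum_comp e (fun x => φ (f x)), Finset.mul_sum]
    refine Finset.sum_congr rfl fun u _ => ?_
    rw [he u, map_mul, mul_comm]
  have h8inv2 : φ 2 * φ ((8 : ZMod p)⁻¹) = 1 := by
    rw [← map_mul]
    have he : (2 : ZMod p) * (8 : ZMod p)⁻¹ = 2⁻¹ * 2⁻¹ := by
      field_simp
      norm_num
    rw [he, map_mul]
    have := hφunit_sq (2 : ZMod p)⁻¹ (inv_ne_zero h2)
    rw [← map_mul] at this ⊢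
    exact this
  -- Step 3 : T = J + conj J
  set G : ZMod p → ℂ := fun t => χ₄ t * φ (t - 1) with hG
  have hGsq : ∀ u : ZMod p, φ (u * (u ^ 2 - 1)) = G (u ^ 2) := by
    intro u
    show _ = χ₄ (u ^ 2) * φ (u ^ 2 - 1)
    rw [map_mul]
    congr 1
    rw [map_pow, ← pow_apply' χ₄ two_ne_zero, hχsq]
  have hG0 : G 0 = 0 := by
    simp [hG]
  have key3 : ∑ u : ZMod p, φ (u * (u ^ 2 - 1)) = ∑ t : ZMod p, (1 + φ t) * G t := by
    calc ∑ u : ZMod p, φ (u * (u ^ 2 - 1)) = ∑ u : ZMod p, G (u ^ 2) :=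
          Finset.sum_congr rfl fun u _ => hGsq u
      _ = ∑ t : ZMod p, ∑ u ∈ univ.filter (fun u : ZMod p => u ^ 2 = t), G t :=
          (Finset.sum_fiberwise' univ (fun u : ZMod p => u ^ 2) G).symm
      _ = ∑ t : ZMod p, ((univ.filter (fun u : ZMod p => u ^ 2 = t)).card : ℂ) * G t := by
          refine Finset.sum_congr rfl fun t _ => ?_
          rw [Finset.sum_const, nsmul_eq_mul]
      _ = ∑ t : ZMod p, (1 + φ t) * G t := by
          refine Finset.sum_congr rfl fun t _ => ?_
          by_cases ht : t = 0
          · subst ht; rw [hG0, mul_zero, mul_zero]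
          · rw [hcount t]
  have hJ1 : ∑ t : ZMod p, G t = J := by
    rw [hJ]
    exact Finset.sum_congr rfl fun t _ => by rw [hG]; simp only; rw [hφflip]
  have hJ2 : ∑ t : ZMod p, φ t * G t = (starRingEnd ℂ) J := by
    rw [hJ, map_sum]
    refine Finset.sum_congr rfl fun t _ => ?_
    show φ t * (χ₄ t * φ (t - 1)) = (starRingEnd ℂ) (χ₄ t * φ (1 - t))
    rw [map_mul (starRingEnd ℂ), hconjφ, hφflip]
    by_cases ht : t = 0
    · simp [ht]
    · have hz4 : χ₄ t ^ 4 = 1 := by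
        rw [← pow_apply' χ₄ (by norm_num : (4:ℕ) ≠ 0), hχ₄4,
          one_apply (isUnit_iff_ne_zero.mpr ht)]
      have hnorm : ‖χ₄ t‖ = 1 := Complex.norm_eq_one_of_pow_eq_one hz4 (by norm_num)
      have hmc : χ₄ t * (starRingEnd ℂ) (χ₄ t) = 1 := by
        rw [Complex.mul_conj, Complex.normSq_eq_norm_sq, hnorm]
        norm_num
      have hφt : φ t = χ₄ t ^ 2 := by rw [← hχsq, pow_apply' χ₄ two_ne_zero]
      rw [hφt]
      have hkey : χ₄ t ^ 2 * χ₄ t = (starRingEnd ℂ) (χ₄ t) := by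
        linear_combination (starRingEnd ℂ) (χ₄ t) * hz4 - (χ₄ t) ^ 3 * hmc
      linear_combination φ (1 - t) * hkey
  have hsplit : ∑ t : ZMod p, (1 + φ t) * G t = J + (starRingEnd ℂ) J := by
    rw [← hJ2, ← hJ1, ← Finset.sum_add_distrib]
    exact Finset.sum_congr rfl fun t _ => by ring
  -- Assemble
  have hφ2sq : φ 2 * φ 2 = 1 := hφunit_sq 2 h2
  have hfin : ∑ x : ZMod p, φ (f x) = 2 * φ 2 * ((J.re : ℝ) : ℂ) := by
    rw [key2, key3, hsplit, Complex.add_conj]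
    push_cast
    linear_combination (2 * (J.re : ℂ)) * (φ 2 * h8inv2 - φ ((8:ZMod p)⁻¹) * hφ2sq)
  rw [key1, hfin]
  ring
end

section
/- Let l ≥ 4 be an integer with l ≡ 0 (mod 4), let p be an odd prime with p ≡ 1 (mod l) such that (p−1)/l is odd, let χ be a multiplicative character of F_p of order l with values in ℂ, let χ₄ be a multiplicative character of F_p of order 4, and let φ be the quadratic character of F_p. Then N_l(1/2) = p + 2·φ(2)·Re( J(χ₄, φ) ) + 2·∑_{i=1}^{(l−4)/4} Re( χ^{−2i}(8) · χ^{2i}(−1) · ( J(χ^i, χ^{2i}) + J(φχ^i, χ^{2i}) ) ), where 1/2 denotes the inverse of 2 in F_p. (This is the first case of the paper's Corollary 3.8, translated via (A choose B) = B(−1)/p · J(A, B̄) and a_p = p − N_l(1/2).) -/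
open Finset

namespace PCaux

variable {p : ℕ} [Fact p.Prime]


lemma ext_gen {g : (ZMod p)ˣ} (hg : ∀ x, x ∈ Subgroup.zpowers g)
    {χ χ' : MulChar (ZMod p) ℂ} (h : χ (g : ZMod p) = χ' (g : ZMod p)) : χ = χ' := by
  refine MulChar.ext fun x => ?_
  obtain ⟨k, hk⟩ := (Submonoid.mem_powers_iff _ _).mp (mem_powers_iff_mem_zpowers.mpr (hg x))
  rw [← hk, Units.val_pow_eq_pow_val, map_pow, map_pow, h]

lemma orderOf_apply_gen {g : (ZMod p)ˣ} (hg : ∀ x, x ∈ Subgroup.zpowers g)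
    (χ : MulChar (ZMod p) ℂ) : orderOf (χ (g : ZMod p)) = orderOf χ := by
  refine Nat.dvd_antisymm ?_ ?_
  · apply orderOf_dvd_of_pow_eq_one
    rw [← MulChar.pow_apply_coe, pow_orderOf_eq_one, MulChar.one_apply_coe]
  · refine orderOf_dvd_of_pow_eq_one (ext_gen hg ?_)
    rw [MulChar.pow_apply_coe, pow_orderOf_eq_one, MulChar.one_apply_coe]

/-- Number of `n`-th roots of unity in `ZMod p` is `n` when `n ∣ p - 1`. -/
lemma card_nthRoots_one {n : ℕ} (hn : 0 < n) (hnd : n ∣ p - 1) :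
    (univ.filter (fun y : ZMod p => y ^ n = 1)).card = n := by
  obtain ⟨g, hg⟩ := IsCyclic.exists_generator (α := (ZMod p)ˣ)
  have hordg : orderOf g = p - 1 := by
    rw [orderOf_eq_card_of_forall_mem_zpowers hg, Nat.card_eq_fintype_card, ZMod.card_units]
  obtain ⟨d, hd⟩ := hnd
  have hd0 : 0 < d := by
    rcases Nat.eq_zero_or_pos d with h | h
    · exfalso
      have h2 := (Fact.out : p.Prime).two_le
      rw [h, mul_zero] at hd
      omega
    · exact h
  -- upper bound via units
  have hcard_units : (univ.filter (fun y : (ZMod p)ˣ => y ^ n = 1)).card ≤ n := by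
    simpa using IsCyclic.card_pow_eq_one_le (α := (ZMod p)ˣ) hn
  have hbij : (univ.filter (fun y : ZMod p => y ^ n = 1)).card
      = (univ.filter (fun y : (ZMod p)ˣ => y ^ n = 1)).card := by
    refine (Finset.card_bij (fun (y : (ZMod p)ˣ) _ => (y : ZMod p)) ?_ ?_ ?_).symm
    · intro a ha
      simp only [mem_filter, mem_univ, true_and] at ha ⊢
      rw [← Units.val_pow_eq_pow_val, ha, Units.val_one]
    · intro a ha b hb hab
      exact Units.ext hab
    · intro b hb
      simp only [mem_filter, mem_univ, true_and] at hb
      have hb0 : b ≠ 0 := by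
        intro h
        rw [h, zero_pow hn.ne'] at hb
        exact zero_ne_one hb
      refine ⟨(isUnit_iff_ne_zero.mpr hb0).unit, ?_, rfl⟩
      simp only [mem_filter, mem_univ, true_and]
      apply Units.ext
      rw [Units.val_pow_eq_pow_val, IsUnit.unit_spec, hb, Units.val_one]
  -- lower bound: powers of h := g ^ d
  set h := g ^ d with hh
  have hordh : orderOf h = n := by
    rw [hh, orderOf_pow, hordg, hd, show (n*d).gcd d = d from Nat.gcd_eq_right (dvd_mul_left d n), Nat.mul_div_cancel _ hd0]
  have hlow : n ≤ (univ.filter (fun y : (ZMod p)ˣ => y ^ n = 1)).card := by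
    have : ((range n).image (fun i => h ^ i)) ⊆ univ.filter (fun y : (ZMod p)ˣ => y ^ n = 1) := by
      intro y hy
      simp only [mem_image, mem_range] at hy
      obtain ⟨i, _, rfl⟩ := hy
      simp only [mem_filter, mem_univ, true_and]
      rw [← pow_mul, mul_comm, pow_mul, ← hordh, pow_orderOf_eq_one, one_pow]
    refine le_trans (le_of_eq ?_) (Finset.card_le_card this)
    rw [Finset.card_image_of_injOn, card_range]
    intro i hi j hj hij
    simp only [coe_range, Set.mem_Iio] at hi hj
    exact pow_injOn_Iio_orderOf (by simpa [hordh] using hi) (by simpa [hordh] using hj) hij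
  rw [hbij]
  omega



lemma card_pow_eq {n : ℕ} (hn : 0 < n) (hnd : n ∣ p - 1) {ψ : MulChar (ZMod p) ℂ}
    (hψ : orderOf ψ = n) (c : ZMod p) :
    ((univ.filter (fun y : ZMod p => y ^ n = c)).card : ℂ)
      = (if c = 0 then 1 else 0) + ∑ j ∈ range n, (ψ ^ j) c := by
  rcases eq_or_ne c 0 with rfl | hc
  · rw [if_pos rfl]
    have h1 : univ.filter (fun y : ZMod p => y ^ n = 0) = {0} := by
      ext y
      simp [pow_eq_zero_iff hn.ne']
    rw [h1]
    simp [MulChar.map_zero]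
  · rw [if_neg hc, zero_add]
    obtain ⟨g, hg⟩ := IsCyclic.exists_generator (α := (ZMod p)ˣ)
    have hordg : orderOf g = p - 1 := by
      rw [orderOf_eq_card_of_forall_mem_zpowers hg, Nat.card_eq_fintype_card, ZMod.card_units]
    have hcu : IsUnit c := isUnit_iff_ne_zero.mpr hc
    obtain ⟨k, hk⟩ := (Submonoid.mem_powers_iff _ _).mp (mem_powers_iff_mem_zpowers.mpr (hg hcu.unit))
    have hck : ((g : ZMod p)) ^ k = c := by
      rw [← Units.val_pow_eq_pow_val, hk, IsUnit.unit_spec]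
    set w := ψ ((g : ZMod p)) with hw
    have hordw : orderOf w = n := by rw [hw, orderOf_apply_gen hg, hψ]
    have hsum : ∑ j ∈ range n, (ψ ^ j) c = ∑ j ∈ range n, (w ^ k) ^ j := by
      refine Finset.sum_congr rfl fun j _ => ?_
      rw [← hck, ← Units.val_pow_eq_pow_val, MulChar.pow_apply_coe, Units.val_pow_eq_pow_val,
        map_pow, ← hw]
    rw [hsum]
    by_cases hdk : n ∣ k
    · -- c is an n-th power; both sides are n
      have hwk : w ^ k = 1 := by
        obtain ⟨m, rfl⟩ := hdk
        rw [pow_mul, ← hordw, pow_orderOf_eq_one, one_pow]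
      rw [hwk]
      simp only [one_pow, Finset.sum_const, card_range, nsmul_eq_mul, mul_one]
      obtain ⟨m, rfl⟩ := hdk
      have hb : ((g : ZMod p) ^ m) ^ n = c := by
        rw [← pow_mul, mul_comm, hck]
      have hb0 : (g : ZMod p) ^ m ≠ 0 := by
        refine pow_ne_zero _ ?_
        exact (g.isUnit).ne_zero
      -- translate the fiber to the fiber of 1
      have hcard : (univ.filter (fun y : ZMod p => y ^ n = c)).card
          = (univ.filter (fun y : ZMod p => y ^ n = 1)).card := by
        set b := (g : ZMod p) ^ m with hbdef
        refine Finset.card_bij' (fun y _ => y * b⁻¹) (fun z _ => z * b) ?_ ?_ ?_ ?_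
        · intro y hy
          simp only [mem_filter, mem_univ, true_and] at hy ⊢
          rw [mul_pow, hy, ← hb, inv_pow, mul_inv_cancel₀ (pow_ne_zero _ hb0)]
        · intro z hz
          simp only [mem_filter, mem_univ, true_and] at hz ⊢
          rw [mul_pow, hz, one_mul, hb]
        · intro y _
          field_simp
        · intro z _
          field_simp
      rw [hcard, card_nthRoots_one hn hnd]
    · -- no solutions; both sides are 0
      have hwk1 : w ^ k ≠ 1 := fun h => hdk (hordw ▸ orderOf_dvd_of_pow_eq_one h)
      have hwkn : (w ^ k) ^ n = 1 := by
        rw [← pow_mul, mul_comm, pow_mul, ← hordw, pow_orderOf_eq_one, one_pow]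
      rw [geom_sum_eq hwk1, hwkn, sub_self, zero_div]
      have hempty : univ.filter (fun y : ZMod p => y ^ n = c) = ∅ := by
        refine Finset.filter_eq_empty_iff.mpr fun {y} _ => ?_
        intro hy
        have hy0 : y ≠ 0 := by
          intro h
          rw [h, zero_pow hn.ne'] at hy
          exact hc hy.symm
        have hyu : IsUnit y := isUnit_iff_ne_zero.mpr hy0
        obtain ⟨t, ht⟩ := (Submonoid.mem_powers_iff _ _).mp
          (mem_powers_iff_mem_zpowers.mpr (hg hyu.unit))
        have : g ^ (t * n) = g ^ k := by
          apply Units.ext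
          rw [Units.val_pow_eq_pow_val, Units.val_pow_eq_pow_val]
          calc (g : ZMod p) ^ (t * n) = ((g : ZMod p) ^ t) ^ n := by rw [pow_mul]
            _ = y ^ n := by
                congr 1
                rw [← Units.val_pow_eq_pow_val, ht, IsUnit.unit_spec]
            _ = c := hy
            _ = (g : ZMod p) ^ k := hck.symm
        have hmod : t * n ≡ k [MOD p - 1] := by
          rw [← hordg]
          exact (pow_eq_pow_iff_modEq).mp this
        have hmodn : t * n ≡ k [MOD n] := hmod.of_dvd hnd
        have : k % n = 0 := by
          have := hmodn.symm
          unfold Nat.ModEq at this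
          simpa [Nat.mul_mod_left] using this
        exact hdk (Nat.dvd_of_mod_eq_zero this)
      rw [hempty]
      simp



lemma two_ne_zero2 (hp2 : p ≠ 2) : (2 : ZMod p) ≠ 0 := by
  intro h
  have h2 : ((2 : ℕ) : ZMod p) = 0 := by exact_mod_cast h
  have := (ZMod.natCast_eq_zero_iff 2 p).mp h2
  rcases (Nat.prime_dvd_prime_iff_eq (Fact.out : p.Prime) Nat.prime_two).mp this with h
  exact hp2 h

lemma pow_half_eq_neg_one {z : ℂ} {l : ℕ} (hl : 2 ≤ l) (hle : l % 2 = 0)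
    (hord : orderOf z = l) : z ^ (l / 2) = -1 := by
  have h1 : z ^ (l / 2) * z ^ (l / 2) = 1 := by
    rw [← pow_add, show l / 2 + l / 2 = l by omega, ← hord, pow_orderOf_eq_one]
  rcases mul_self_eq_one_iff.mp h1 with h | h
  · exfalso
    have hdvd := orderOf_dvd_of_pow_eq_one h
    rw [hord] at hdvd
    have := Nat.le_of_dvd (by omega) hdvd
    omega
  · exact h

lemma chi_neg_one {g : (ZMod p)ˣ} (hg : ∀ x, x ∈ Subgroup.zpowers g)
    {χ : MulChar (ZMod p) ℂ} {l d : ℕ} (hl : 4 ≤ l) (hl4 : l % 4 = 0)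
    (hχ : orderOf χ = l) (hd : p - 1 = l * d) (hodd : Odd d) (hp2 : p ≠ 2) :
    χ (-1) = -1 := by
  have hordg : orderOf g = p - 1 := by
    rw [orderOf_eq_card_of_forall_mem_zpowers hg, Nat.card_eq_fintype_card, ZMod.card_units]
  obtain ⟨k, hk⟩ := (Submonoid.mem_powers_iff _ _).mp
    (mem_powers_iff_mem_zpowers.mpr (hg (-1)))
  have hg2 : g ^ (2 * k) = 1 := by
    rw [mul_comm, pow_mul, hk]
    simp
  have hdvd : p - 1 ∣ 2 * k := hordg ▸ orderOf_dvd_of_pow_eq_one hg2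
  obtain ⟨l2, hl2⟩ : ∃ l2, l = 2 * l2 := ⟨l / 2, by omega⟩
  have hdvd2 : 2 * (l2 * d) ∣ 2 * k := by
    have h' : l * d = 2 * (l2 * d) := by rw [hl2]; ring
    rwa [hd, h'] at hdvd
  obtain ⟨m, hm⟩ := Nat.dvd_of_mul_dvd_mul_left (by norm_num) hdvd2
  have hneg1 : ((-1 : (ZMod p)ˣ) : ZMod p) = (-1 : ZMod p) := by
    rw [Units.val_neg, Units.val_one]
  have hmodd : Odd m := by
    rcases Nat.even_or_odd m with he | ho
    · exfalso
      obtain ⟨m', hm'⟩ := he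
      have hkval : k = (p - 1) * m' := by
        rw [hd, hm, hm', hl2]
        ring
      have hgk : g ^ k = 1 := by
        rw [hkval, pow_mul, ← hordg, pow_orderOf_eq_one, one_pow]
      have hval := congrArg (Units.val) (hgk.symm.trans hk)
      rw [Units.val_one, hneg1] at hval
      have h20 : (2 : ZMod p) = 0 := by linear_combination hval
      exact two_ne_zero2 hp2 h20
    · exact ho
  have hζ : orderOf (χ ((g : ZMod p))) = l := by rw [orderOf_apply_gen hg, hχ]
  have hhalf : (χ ((g : ZMod p))) ^ l2 = -1 := by
    rw [show l2 = l / 2 by omega]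
    exact pow_half_eq_neg_one (by omega) (by omega) hζ
  have hχm1 : χ (-1 : ZMod p) = (χ ((g : ZMod p))) ^ k := by
    rw [← hneg1, ← hk, Units.val_pow_eq_pow_val, map_pow]
  rw [hχm1, hm, show l2 * d * m = l2 * (d * m) by ring, pow_mul, hhalf,
    Odd.neg_one_pow (hodd.mul hmodd)]



lemma core_eval (hp2 : p ≠ 2) {φ ψ η : MulChar (ZMod p) ℂ}
    (hφ : orderOf φ = 2) (h2d : 2 ∣ p - 1)
    (hψη : ∀ a : ZMod p, ψ a = η a * η a) :
    ∑ x : ZMod p, ψ (x * (x - 1) * (x - (2 : ZMod p)⁻¹))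
      = ψ⁻¹ 8 * ψ (-1) *
        ((∑ t : ZMod p, η t * ψ (1 - t)) + ∑ t : ZMod p, (φ * η) t * ψ (1 - t)) := by
  have h2 : (2 : ZMod p) ≠ 0 := two_ne_zero2 hp2
  have h2c : (2 : ZMod p) * 2⁻¹ = 1 := mul_inv_cancel₀ h2
  have h8 : (8 : ZMod p) ≠ 0 := by
    have h83 : (8 : ZMod p) = 2 ^ 3 := by norm_num
    rw [h83]
    exact pow_ne_zero 3 h2
  have hψ8 : ψ 8 ≠ 0 := ((isUnit_iff_ne_zero.mpr h8).map ψ).ne_zero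
  have key : ∀ x : ZMod p, (2 * x - 1) ^ 3 - (2 * x - 1)
      = 8 * (x * (x - 1) * (x - (2 : ZMod p)⁻¹)) := by
    intro x
    linear_combination (4 * (x ^ 2 - x)) * h2c
  -- the substitution x ↦ 2x - 1
  have hsub : ∑ x : ZMod p, ψ ((2 * x - 1) ^ 3 - (2 * x - 1))
      = ∑ u : ZMod p, ψ (u ^ 3 - u) := by
    set e := (Equiv.mulLeft₀ (2 : ZMod p) h2).trans (Equiv.subRight (1 : ZMod p)) with he
    refine Fintype.sum_bijective e e.bijective _ _ fun x => ?_
    rfl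
  -- step: the `u`-sum via squares
  have hstep : ∑ u : ZMod p, ψ (u ^ 3 - u)
      = ψ (-1) * ∑ u : ZMod p, η (u ^ 2) * ψ (1 - u ^ 2) := by
    rw [Finset.mul_sum]
    refine Finset.sum_congr rfl fun u _ => ?_
    have h1 : u ^ 3 - u = (-1) * ((1 - u ^ 2) * u) := by ring
    rw [h1, map_mul, map_mul]
    have h2' : η (u ^ 2) = ψ u := by
      rw [show u ^ 2 = u * u by ring, map_mul, ← hψη]
    rw [← h2']
    ring
  -- fiberwise decomposition over t = u^2
  have hfib : ∑ u : ZMod p, η (u ^ 2) * ψ (1 - u ^ 2)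
      = ∑ t : ZMod p, ((univ.filter (fun u : ZMod p => u ^ 2 = t)).card : ℂ)
          * (η t * ψ (1 - t)) := by
    rw [← Finset.sum_fiberwise univ (fun u : ZMod p => u ^ 2)
      (fun u => η (u ^ 2) * ψ (1 - u ^ 2))]
    refine Finset.sum_congr rfl fun t _ => ?_
    have hconst : ∀ u ∈ filter (fun u : ZMod p => u ^ 2 = t) univ,
        η (u ^ 2) * ψ (1 - u ^ 2) = η t * ψ (1 - t) := by
      intro u hu
      simp only [mem_filter, mem_univ, true_and] at hu
      rw [hu]
    rw [Finset.sum_congr rfl hconst, Finset.sum_const, nsmul_eq_mul]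
  -- evaluate the card via the quadratic character
  have hcard : ∀ t : ZMod p,
      ((univ.filter (fun u : ZMod p => u ^ 2 = t)).card : ℂ)
        = (if t = 0 then 1 else 0) + ((1 : MulChar (ZMod p) ℂ) t + φ t) := by
    intro t
    rw [card_pow_eq (by norm_num) h2d hφ t]
    congr 1
    rw [Finset.sum_range_succ, Finset.sum_range_succ, Finset.sum_range_zero, zero_add,
      pow_zero, pow_one]
  have hsplit : ∑ t : ZMod p, ((univ.filter (fun u : ZMod p => u ^ 2 = t)).card : ℂ)
          * (η t * ψ (1 - t))
      = (∑ t : ZMod p, η t * ψ (1 - t)) + ∑ t : ZMod p, (φ * η) t * ψ (1 - t) := by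
    have expand : ∀ t : ZMod p,
        ((univ.filter (fun u : ZMod p => u ^ 2 = t)).card : ℂ) * (η t * ψ (1 - t))
        = (if t = 0 then 1 else 0) * (η t * ψ (1 - t))
          + (η t * ψ (1 - t) + (φ * η) t * ψ (1 - t)) := by
      intro t
      rw [hcard t]
      rcases eq_or_ne t 0 with rfl | ht
      · simp [MulChar.map_zero]
      · rw [MulChar.one_apply (isUnit_iff_ne_zero.mpr ht), MulChar.mul_apply]
        ring
    rw [Finset.sum_congr rfl (fun t _ => expand t), Finset.sum_add_distrib,
      Finset.sum_add_distrib]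
    have hzero : ∑ t : ZMod p, (if t = 0 then (1 : ℂ) else 0) * (η t * ψ (1 - t)) = 0 := by
      rw [Finset.sum_eq_single 0]
      · simp [MulChar.map_zero]
      · intro b _ hb
        rw [if_neg hb, zero_mul]
      · simp
    rw [hzero, zero_add]
  -- put everything together
  have main : ψ 8 * ∑ x : ZMod p, ψ (x * (x - 1) * (x - (2 : ZMod p)⁻¹))
      = ψ (-1) * ((∑ t : ZMod p, η t * ψ (1 - t)) + ∑ t : ZMod p, (φ * η) t * ψ (1 - t)) := by
    rw [Finset.mul_sum]
    calc ∑ x : ZMod p, ψ 8 * ψ (x * (x - 1) * (x - (2 : ZMod p)⁻¹))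
        = ∑ x : ZMod p, ψ ((2 * x - 1) ^ 3 - (2 * x - 1)) := by
          refine Finset.sum_congr rfl fun x _ => ?_
          rw [← map_mul, ← key x]
      _ = ψ (-1) * ((∑ t : ZMod p, η t * ψ (1 - t)) + ∑ t : ZMod p, (φ * η) t * ψ (1 - t)) := by
          rw [hsub, hstep, hfib, hsplit]
  rw [MulChar.inv_apply_eq_inv']
  have hfin := congrArg (fun z => (ψ 8)⁻¹ * z) main
  rw [← mul_assoc, inv_mul_cancel₀ hψ8, one_mul] at hfin
  rw [hfin]
  ring

end PCaux

open PCaux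


/-- first case of Corollary 3.8: For `l ≥ 4` with `4 ∣ l`, an odd
prime `p ≡ 1 (mod l)` with `(p−1)/l` odd, `χ` of order `l`, `χ₄` of order `4`,
and `φ` the quadratic character,
`N_l(1/2) = p + 2 φ(2) Re(J(χ₄, φ))
  + 2 ∑_{i=1}^{(l−4)/4} Re(χ^{−2i}(8) χ^{2i}(−1) (J(χ^i, χ^{2i}) + J(φχ^i, χ^{2i})))`. -/
theorem point_count_half_odd_zero_mod_four (p : ℕ) [Fact p.Prime] (hp2 : p ≠ 2)
    (l : ℕ) (hl : 4 ≤ l) (hl4 : l % 4 = 0) (hpl : p % l = 1)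
    (hodd : Odd ((p - 1) / l))
    (χ χ₄ φ : MulChar (ZMod p) ℂ) (hχ : orderOf χ = l) (hχ₄ : orderOf χ₄ = 4)
    (hφ : orderOf φ = 2) :
    ((Finset.univ.filter
        (fun v : ZMod p × ZMod p =>
          v.2 ^ l = v.1 * (v.1 - 1) * (v.1 - (2 : ZMod p)⁻¹))).card : ℂ) =
      p + 2 * φ 2 * (((∑ t : ZMod p, χ₄ t * φ (1 - t)).re : ℝ) : ℂ) +
        2 * ∑ i ∈ Finset.Icc 1 ((l - 4) / 4),
          ((((χ ^ (2 * i))⁻¹ 8 * (χ ^ (2 * i)) (-1) *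
              ((∑ t : ZMod p, (χ ^ i) t * (χ ^ (2 * i)) (1 - t)) +
                ∑ t : ZMod p, (φ * χ ^ i) t * (χ ^ (2 * i)) (1 - t))).re : ℝ) : ℂ) := by
  have hprime : p.Prime := Fact.out
  have hl0 : 0 < l := by omega
  have hldvd : l ∣ p - 1 := by
    have h := Nat.div_add_mod p l
    exact ⟨p / l, by omega⟩
  obtain ⟨d, hd⟩ := hldvd
  have hd' : (p - 1) / l = d := by rw [hd]; exact Nat.mul_div_cancel_left d hl0
  rw [hd'] at hodd
  have hd0 : d ≠ 0 := by
    have := Nat.odd_iff.mp hodd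
    omega
  have hp5 : 5 ≤ p := by
    have h1 := hprime.two_le
    have h2 : l ≤ l * d := Nat.le_mul_of_pos_right l (by omega)
    omega
  have h2 : (2 : ZMod p) ≠ 0 := two_ne_zero2 hp2
  have h2c : (2 : ZMod p) * 2⁻¹ = 1 := mul_inv_cancel₀ h2
  obtain ⟨l4, hl4'⟩ : ∃ l4, l = 4 * l4 := ⟨l / 4, by omega⟩
  have hl41 : 1 ≤ l4 := by omega
  have h2dvd : 2 ∣ p - 1 := ⟨2 * l4 * d, by rw [hd, hl4']; ring⟩
  obtain ⟨g, hg⟩ := IsCyclic.exists_generator (α := (ZMod p)ˣ)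
  have hχneg : χ (-1) = -1 := chi_neg_one hg hl hl4 hχ hd hodd hp2
  set T : ℕ → ℂ := fun j =>
    ∑ x : ZMod p, (χ ^ j) (x * (x - 1) * (x - (2 : ZMod p)⁻¹)) with hT
  -- ### Milestone A
  have hN : ((Finset.univ.filter
        (fun v : ZMod p × ZMod p =>
          v.2 ^ l = v.1 * (v.1 - 1) * (v.1 - (2 : ZMod p)⁻¹))).card : ℂ)
      = p + ∑ j ∈ Ico 1 l, T j := by
    have hc1 : ((Finset.univ.filter
        (fun v : ZMod p × ZMod p =>
          v.2 ^ l = v.1 * (v.1 - 1) * (v.1 - (2 : ZMod p)⁻¹))).card : ℂ)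
        = ∑ x : ZMod p, ((univ.filter (fun y : ZMod p =>
            y ^ l = x * (x - 1) * (x - (2 : ZMod p)⁻¹))).card : ℂ) := by
      rw [Finset.card_filter, Fintype.sum_prod_type]
      push_cast
      refine Finset.sum_congr rfl fun x _ => ?_
      rw [Finset.card_filter]
      push_cast
      rfl
    rw [hc1, Finset.sum_congr rfl (fun x _ => card_pow_eq hl0 ⟨d, hd⟩ hχ _),
      Finset.sum_add_distrib]
    have hinv0 : (2 : ZMod p)⁻¹ ≠ 0 := inv_ne_zero h2
    have hinv1 : (2 : ZMod p)⁻¹ ≠ 1 := by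
      intro h
      rw [h, mul_one] at h2c
      have h10 : (1 : ZMod p) = 0 := by linear_combination h2c
      exact one_ne_zero h10
    have hroots : univ.filter (fun x : ZMod p => x * (x - 1) * (x - (2 : ZMod p)⁻¹) = 0)
        = {0, 1, (2 : ZMod p)⁻¹} := by
      ext x
      simp only [mem_filter, mem_univ, true_and, mem_insert, mem_singleton]
      rw [mul_eq_zero, mul_eq_zero, sub_eq_zero, sub_eq_zero]
      tauto
    have hδ : ∑ x : ZMod p,
        (if x * (x - 1) * (x - (2 : ZMod p)⁻¹) = 0 then (1 : ℂ) else 0) = 3 := by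
      rw [Finset.sum_boole, hroots]
      rw [card_insert_of_notMem (by simp [hinv0.symm]),
        card_insert_of_notMem (by simp [hinv1.symm]), card_singleton]
      norm_num
    have hT0 : ∑ x : ZMod p,
        ((χ ^ 0) (x * (x - 1) * (x - (2 : ZMod p)⁻¹))) = (p : ℂ) - 3 := by
      have hpt : ∀ x : ZMod p, (χ ^ 0) (x * (x - 1) * (x - (2 : ZMod p)⁻¹))
          = 1 - (if x * (x - 1) * (x - (2 : ZMod p)⁻¹) = 0 then (1 : ℂ) else 0) := by
        intro x
        rw [pow_zero]
        rcases eq_or_ne (x * (x - 1) * (x - (2 : ZMod p)⁻¹)) 0 with h | h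
        · rw [h, if_pos rfl, MulChar.map_zero]
          norm_num
        · rw [if_neg h, MulChar.one_apply (isUnit_iff_ne_zero.mpr h)]
          norm_num
      rw [Finset.sum_congr rfl fun x _ => hpt x, Finset.sum_sub_distrib, hδ,
        Finset.sum_const, card_univ, ZMod.card, nsmul_eq_mul, mul_one]
    rw [hδ, Finset.sum_comm, Finset.range_eq_Ico, Finset.sum_eq_sum_Ico_succ_bot hl0, hT0]
    simp only [hT]
    ring
  -- ### Milestone B : odd terms vanish
  have hBodd : ∀ j, Odd j → T j = 0 := by
    intro j hj
    have hj0 : j ≠ 0 := by rintro rfl; simp [Nat.odd_iff] at hj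
    have hker : ∀ x : ZMod p, (1 - x) * ((1 - x) - 1) * ((1 - x) - (2 : ZMod p)⁻¹)
        = (-1) * (x * (x - 1) * (x - (2 : ZMod p)⁻¹)) := by
      intro x
      linear_combination (x - x * x) * h2c
    have hrefl : T j = ∑ x : ZMod p,
        (χ ^ j) ((1 - x) * ((1 - x) - 1) * ((1 - x) - (2 : ZMod p)⁻¹)) := by
      simp only [hT]
      exact (Fintype.sum_bijective (fun x : ZMod p => 1 - x) (Equiv.subLeft 1).bijective
        (fun x => (χ ^ j) ((1 - x) * ((1 - x) - 1) * ((1 - x) - (2 : ZMod p)⁻¹)))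
        (fun x => (χ ^ j) (x * (x - 1) * (x - (2 : ZMod p)⁻¹))) (fun x => rfl)).symm
    have hval : (χ ^ j) (-1 : ZMod p) = -1 := by
      rw [MulChar.pow_apply' χ hj0, hχneg, Odd.neg_one_pow hj]
    have hTT : T j = - T j := by
      calc T j = ∑ x : ZMod p,
            (χ ^ j) ((1 - x) * ((1 - x) - 1) * ((1 - x) - (2 : ZMod p)⁻¹)) := hrefl
        _ = ∑ x : ZMod p, ((χ ^ j) (-1 : ZMod p)) *
              (χ ^ j) (x * (x - 1) * (x - (2 : ZMod p)⁻¹)) := by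
            refine Finset.sum_congr rfl fun x _ => ?_
            rw [hker x, map_mul]
        _ = - T j := by
            rw [← Finset.mul_sum, hval]
            simp only [hT]
            ring
    linear_combination (1 / 2 : ℂ) * hTT
  -- ### conjugation
  have hconj : ∀ i : ℕ, 2 * i ≤ l → T (l - 2 * i) = (starRingEnd ℂ) (T (2 * i)) := by
    intro i hi
    simp only [hT]
    rw [map_sum]
    refine Finset.sum_congr rfl fun x _ => ?_
    have hpow : χ ^ (l - 2 * i) = (χ ^ (2 * i))⁻¹ := by
      apply eq_inv_of_mul_eq_one_left
      rw [← pow_add, show l - 2 * i + 2 * i = l by omega, ← hχ, pow_orderOf_eq_one]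
    rw [hpow, starRingEnd_apply, MulChar.star_apply']
  -- ### core evaluation
  have hC : ∀ i : ℕ, 1 ≤ i → T (2 * i)
      = (χ ^ (2 * i))⁻¹ 8 * (χ ^ (2 * i)) (-1) *
        ((∑ t : ZMod p, (χ ^ i) t * (χ ^ (2 * i)) (1 - t)) +
          ∑ t : ZMod p, (φ * χ ^ i) t * (χ ^ (2 * i)) (1 - t)) := by
    intro i hi
    simp only [hT]
    refine core_eval hp2 hφ h2dvd fun a => ?_
    rw [MulChar.pow_apply' χ (by omega), MulChar.pow_apply' χ (by omega), ← pow_add]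
    congr 1
    omega
  -- ### identification of φ and χ₄
  have hζ : orderOf (χ ((g : ZMod p))) = l := by rw [orderOf_apply_gen hg, hχ]
  have hζhalf : (χ ((g : ZMod p))) ^ (2 * l4) = -1 := by
    have h := pow_half_eq_neg_one (z := χ ((g : ZMod p))) (l := l) (by omega) (by omega) hζ
    rwa [show l / 2 = 2 * l4 by omega] at h
  have hφeq : φ = χ ^ (2 * l4) := by
    apply ext_gen hg
    rw [MulChar.pow_apply_coe, hζhalf]
    have hordφg : orderOf (φ ((g : ZMod p))) = 2 := by rw [orderOf_apply_gen hg, hφ]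
    have h := pow_half_eq_neg_one (l := 2) le_rfl rfl hordφg
    simpa using h
  have hφφ : φ * φ = 1 := by
    have h := pow_orderOf_eq_one φ
    rw [hφ, pow_two] at h
    exact h
  have hφinv : φ⁻¹ = φ := inv_eq_of_mul_eq_one_left hφφ
  have hφm1 : φ (-1) = 1 := by
    rw [hφeq, MulChar.pow_apply' χ (by omega), hχneg, Even.neg_one_pow (even_two_mul l4)]
  have hφ8 : φ 8 = φ 2 := by
    have h4 : φ 4 = 1 := by
      rw [show (4 : ZMod p) = 2 * 2 by norm_num, map_mul, ← MulChar.mul_apply, hφφ,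
        MulChar.one_apply (isUnit_iff_ne_zero.mpr h2)]
    rw [show (8 : ZMod p) = 2 * 4 by norm_num, map_mul, h4, mul_one]
  have hmul : φ * χ ^ l4 = (χ ^ l4)⁻¹ := by
    apply eq_inv_of_mul_eq_one_left
    rw [hφeq, ← pow_add, ← pow_add, show 2 * l4 + l4 + l4 = l by omega, ← hχ,
      pow_orderOf_eq_one]
  have hφreal : ∀ a : ZMod p, (starRingEnd ℂ) (φ a) = φ a := by
    intro a
    rw [starRingEnd_apply, MulChar.star_apply', hφinv]
  have hJconj : ∑ t : ZMod p, ((χ ^ l4)⁻¹) t * φ (1 - t)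
      = (starRingEnd ℂ) (∑ t : ZMod p, (χ ^ l4) t * φ (1 - t)) := by
    rw [map_sum]
    refine Finset.sum_congr rfl fun t _ => ?_
    rw [map_mul, hφreal, starRingEnd_apply, MulChar.star_apply']
  have hζ4 : orderOf ((χ ((g : ZMod p))) ^ l4) = 4 := by
    have h4 : ((χ ((g : ZMod p))) ^ l4) ^ 4 = 1 := by
      rw [← pow_mul, show l4 * 4 = l by omega, ← hζ, pow_orderOf_eq_one]
    rw [orderOf_eq_iff (by norm_num)]
    refine ⟨h4, fun m hm4 hm hone => ?_⟩
    rw [← pow_mul] at hone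
    have hdvd := orderOf_dvd_of_pow_eq_one hone
    rw [hζ, hl4'] at hdvd
    have hle := Nat.le_of_dvd (Nat.mul_pos (by omega) hm) hdvd
    nlinarith
  have hχ4g : orderOf (χ₄ ((g : ZMod p))) = 4 := by rw [orderOf_apply_gen hg, hχ₄]
  have hsq : ∀ z : ℂ, orderOf z = 4 → z ^ 2 = -1 := by
    intro z hz
    have h := pow_half_eq_neg_one (l := 4) (by omega) (by norm_num) hz
    simpa using h
  have hcase : χ₄ = χ ^ l4 ∨ χ₄ = (χ ^ l4)⁻¹ := by
    have ha := hsq _ hχ4g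
    have hb := hsq _ hζ4
    have hprod : (χ₄ ((g : ZMod p)) - (χ ((g : ZMod p))) ^ l4) *
        (χ₄ ((g : ZMod p)) + (χ ((g : ZMod p))) ^ l4) = 0 := by
      linear_combination ha - hb
    rcases mul_eq_zero.mp hprod with h | h
    · left
      apply ext_gen hg
      rw [MulChar.pow_apply_coe]
      linear_combination h
    · right
      apply ext_gen hg
      rw [MulChar.inv_apply_eq_inv', MulChar.pow_apply_coe]
      have hbne : (χ ((g : ZMod p))) ^ l4 ≠ 0 := by
        intro h0
        rw [h0] at hb
        norm_num at hb
      field_simp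
      linear_combination ((χ ((g : ZMod p))) ^ l4) * h - hb
  -- ### middle term
  have hmid : T (2 * l4) = 2 * φ 2 * (((∑ t : ZMod p, χ₄ t * φ (1 - t)).re : ℝ) : ℂ) := by
    rw [hC l4 hl41, ← hφeq, hφinv, hφm1, mul_one, hφ8, hmul, hJconj, Complex.add_conj]
    have hre : (∑ t : ZMod p, (χ ^ l4) t * φ (1 - t)).re
        = (∑ t : ZMod p, χ₄ t * φ (1 - t)).re := by
      rcases hcase with h | h
      · rw [h]
      · rw [h, hJconj, Complex.conj_re]
    rw [hre]
    push_cast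
    ring
  -- ### index manipulation
  have hIccIoc : ∀ m : ℕ, Icc 1 m = Ioc 0 m := by
    intro m
    ext a
    simp only [mem_Icc, mem_Ioc]
    omega
  have hsum1 : ∑ j ∈ Ico 1 l, T j = ∑ i ∈ Icc 1 (2 * l4 - 1), T (2 * i) := by
    rw [← Finset.sum_filter_add_sum_filter_not (Ico 1 l) (fun j => Odd j)]
    have hz : ∑ j ∈ (Ico 1 l).filter (fun j => Odd j), T j = 0 :=
      Finset.sum_eq_zero fun j hj => hBodd j (mem_filter.mp hj).2
    rw [hz, zero_add]
    refine Finset.sum_nbij' (fun j => j / 2) (fun i => 2 * i) ?_ ?_ ?_ ?_ ?_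
    · intro a ha
      simp only [mem_filter, mem_Ico, Nat.not_odd_iff_even, Nat.even_iff] at ha
      simp only [mem_Icc]
      omega
    · intro a ha
      simp only [mem_Icc] at ha
      simp only [mem_filter, mem_Ico, Nat.not_odd_iff_even, Nat.even_iff]
      omega
    · intro a ha
      simp only [mem_filter, mem_Ico, Nat.not_odd_iff_even, Nat.even_iff] at ha
      omega
    · intro a _
      omega
    · intro a ha
      simp only [mem_filter, mem_Ico, Nat.not_odd_iff_even, Nat.even_iff] at ha
      exact congrArg T (by omega)
  have hsum2 : ∑ i ∈ Icc 1 (2 * l4 - 1), T (2 * i)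
      = T (2 * l4) + ∑ i ∈ Icc 1 (l4 - 1), (T (2 * i) + T (l - 2 * i)) := by
    rw [hIccIoc]
    rw [← Finset.sum_Ioc_consecutive (fun i => T (2 * i))
      (Nat.zero_le l4) (by omega : l4 ≤ 2 * l4 - 1)]
    have hsplit1 : ∑ i ∈ Ioc 0 l4, T (2 * i)
        = (∑ i ∈ Ioc 0 (l4 - 1), T (2 * i)) + T (2 * l4) := by
      rw [show l4 = (l4 - 1) + 1 by omega, Finset.sum_Ioc_succ_top (Nat.zero_le _)]
      rw [show l4 - 1 + 1 = l4 by omega]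
    have hsplit2 : ∑ i ∈ Ioc l4 (2 * l4 - 1), T (2 * i)
        = ∑ i ∈ Ioc 0 (l4 - 1), T (l - 2 * i) := by
      refine Finset.sum_nbij' (fun i => 2 * l4 - i) (fun i => 2 * l4 - i) ?_ ?_ ?_ ?_ ?_
      · intro a ha
        simp only [mem_Ioc] at ha ⊢
        omega
      · intro a ha
        simp only [mem_Ioc] at ha ⊢
        omega
      · intro a ha
        simp only [mem_Ioc] at ha
        omega
      · intro a ha
        simp only [mem_Ioc] at ha
        omega
      · intro a ha
        simp only [mem_Ioc] at ha
        exact congrArg T (by omega)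
    rw [hsplit1, hsplit2, hIccIoc, Finset.sum_add_distrib]
    ring
  have hpair : ∀ i ∈ Icc 1 (l4 - 1), T (2 * i) + T (l - 2 * i)
      = 2 * ((((χ ^ (2 * i))⁻¹ 8 * (χ ^ (2 * i)) (-1) *
          ((∑ t : ZMod p, (χ ^ i) t * (χ ^ (2 * i)) (1 - t)) +
            ∑ t : ZMod p, (φ * χ ^ i) t * (χ ^ (2 * i)) (1 - t))).re : ℝ) : ℂ) := by
    intro i hi
    simp only [mem_Icc] at hi
    rw [hconj i (by omega), hC i (by omega), Complex.add_conj]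
    push_cast
    ring
  have hIcc : Icc 1 ((l - 4) / 4) = Icc 1 (l4 - 1) := by
    congr 1
    omega
  rw [hN, hsum1, hsum2, hmid, Finset.sum_congr rfl hpair, hIcc, ← Finset.mul_sum]
  ring
end
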